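/- arXiv:2109.06110 — 6 statements merged into one kernel-verified Lean document; each statement's English description precedes it below -/
import Mathlib

section
/- Let G be an n-vertex graph with average degree d > 0. Then there exist real numbers D_1, D_2 ≥ d/4 and a non-empty bipartite subgraph G' of G with parts X_1 and X_2 such that: every x ∈ X_1 satisfies d_{G'}(x) ≥ D_1/(256·(log n)^2) and d_G(x) ≤ D_1, and every x ∈ X_2 satisfies d_{G'}(x) ≥ D_2/(256·(log n)^2) and d_G(x) ≤ D_2. -/
open Real

namespace Paper

/-- `G` contains a copy of `H`, i.e. `H` is a subgraph of `G` (up to injective homomorphism). -/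
def ContainsCopy {α : Type*} {β : Type*} (G : SimpleGraph α) (H : SimpleGraph β) : Prop :=
  ∃ f : H →g G, Function.Injective f

/-- The Turán (extremal) number: the maximum possible number of edges of an `n`-vertex graph
containing no copy of `H`. -/
noncomputable def exNumber (n : ℕ) {β : Type*} (H : SimpleGraph β) : ℕ :=
  sSup {N : ℕ | ∃ G : SimpleGraph (Fin n), ¬ ContainsCopy G H ∧ N = G.edgeSet.ncard}

/-- The (directed) edge relation of the graph `H_{k,ℓ}`, with `0`-based rows in `Fin (4k)`
and columns in `Fin (2ℓ)`.  Row `a` (0-based) corresponds to row `a+1` (1-based) of the paper,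
and similarly for columns. -/
def HRel (k ℓ : ℕ) (p q : Fin (4 * k) × Fin (2 * ℓ)) : Prop :=
  -- matching edges `x_{2i-1,j} x_{2i,j}`
  (p.2 = q.2 ∧ (p.1 : ℕ) % 2 = 0 ∧ (q.1 : ℕ) = (p.1 : ℕ) + 1)
  ∨ ((q.2 : ℕ) = ((p.2 : ℕ) + 1) % (2 * ℓ) ∧
      -- edges `x_{1,j} x_{1,j+1}` and `x_{4k,j} x_{4k,j+1}`
      ((p.1 = q.1 ∧ ((p.1 : ℕ) = 0 ∨ (p.1 : ℕ) = 4 * k - 1))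
        -- edges `x_{2i,j} x_{2i+1,j+1}`
        ∨ ((p.1 : ℕ) % 2 = 1 ∧ (q.1 : ℕ) = (p.1 : ℕ) + 1)
        -- edges `x_{2i+1,j} x_{2i,j+1}`
        ∨ ((p.1 : ℕ) % 2 = 0 ∧ (q.1 : ℕ) + 1 = (p.1 : ℕ))))

/-- The graph `H_{k,ℓ}` from the paper. -/
def HGraph (k ℓ : ℕ) : SimpleGraph (Fin (4 * k) × Fin (2 * ℓ)) :=
  SimpleGraph.fromRel (HRel k ℓ)

/-- The number of homomorphic `m`-cycles of `G`, i.e. `hom(C_m, G)`. -/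
noncomputable def homCount {V : Type*} (G : SimpleGraph V) (m : ℕ) : ℕ :=
  Nat.card {x : ZMod m → V // ∀ i, G.Adj (x i) (x (i + 1))}

/-- The number of (unlabelled) copies of `C₄` in `G`. -/
noncomputable def c4Count {V : Type*} (G : SimpleGraph V) : ℕ :=
  Nat.card {x : ZMod 4 → V // Function.Injective x ∧ ∀ i, G.Adj (x i) (x (i + 1))} / 8

/-- The number of (unlabelled) copies of `C₄` in `G` containing the edge `e`. -/
noncomputable def c4CountEdge {V : Type*} (G : SimpleGraph V) (e : Sym2 V) : ℕ :=
  Nat.card {x : ZMod 4 → V // Function.Injective x ∧ (∀ i, G.Adj (x i) (x (i + 1))) ∧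
    ∃ i, s(x i, x (i + 1)) = e} / 8

/-- Definition 2.1: a `β`-good set `C ⊆ V(G)^{8k}`. -/
def IsGood {V : Type*} (G : SimpleGraph V) (k : ℕ) (β : ℝ) (C : Set (ZMod (8 * k) → V)) :
    Prop :=
  ∃ s : ℝ, 0 < s ∧
    (∀ x ∈ C, Function.Injective x ∧ ∀ i, G.Adj (x i) (x (i + 1))) ∧
    (∀ y ∈ C, ∀ i : ZMod (8 * k),
      (({x ∈ C | ∀ j, j ≠ i → x j = y j}).ncard : ℝ) ≤ s) ∧
    (∀ i : ZMod (8 * k),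
      (({y : {j : ZMod (8 * k) // j ≠ i + 1 ∧ j ≠ i + 2} → V |
          ∃ x ∈ C, ∀ j : {j : ZMod (8 * k) // j ≠ i + 1 ∧ j ≠ i + 2}, x j.1 = y j}).ncard : ℝ)
        ≤ β * (C.ncard : ℝ) / (16 * (k : ℝ) * s))

/-- Definition 2.2: a `β`-nice set `C ⊆ V(G)^{8k}`. -/
def IsNice {V : Type*} (G : SimpleGraph V) (k : ℕ) (β : ℝ) (C : Set (ZMod (8 * k) → V)) :
    Prop :=
  (∀ x ∈ C, Function.Injective x ∧ ∀ i, G.Adj (x i) (x (i + 1))) ∧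
  (∀ i : ZMod (8 * k), ∀ y : ZMod (8 * k) → V, ∀ u : V,
    (({x ∈ C | (∀ j, j ≠ i + 1 → j ≠ i + 2 → x j = y j) ∧
        (x (i + 1) = u ∨ x (i + 2) = u)}).ncard : ℝ)
      ≤ β * (({x ∈ C | ∀ j, j ≠ i + 1 → j ≠ i + 2 → x j = y j}).ncard : ℝ))

end Paper

/-!
Vertices of degree below `d/4` meet at most half of the `e` edges, so the remaining vertices span
at least `e/2` edges, and a greedy cut of them keeps half of these. Sorting both sides of the cut
by `⌊log₂ (degree)⌋` gives at most `(log n + 1)² ≤ 4 (log n)²` pairs of dyadic classes, one of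
which carries at least `e / (16 (log n)²)` cut edges. A class of degrees in `[D/2, D)` has at most
`4e/D` vertices, so repeatedly deleting vertices with fewer than `D / (256 (log n)²)` neighbours
on the other side destroys at most `e / (32 (log n)²)` of these edges; what survives is the
required bipartite graph.
-/

open Finset

theorem natLog_add_one_le_two_mul_logb {n : ℕ} (hn : 2 ≤ n) :
    (Nat.log 2 n + 1 : ℝ) ≤ 2 * logb 2 n := by
  have hlog : (Nat.log 2 n : ℝ) ≤ logb 2 n := by exact_mod_cast natLog_le_logb n 2
  have hone : 1 ≤ logb 2 n := by
    rw [← logb_self_eq_one one_lt_two]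
    exact logb_le_logb_of_le one_lt_two zero_lt_two (mod_cast hn)
  linarith

namespace SimpleGraph

variable {V : Type*} (G : SimpleGraph V)

theorem card_interedges_comm [DecidableRel G.Adj] (s t : Finset V) :
    #(G.interedges s t) = #(G.interedges t s) :=
  have := G.symm
  Rel.card_interedges_comm s t

section LocallyFinite

variable [G.LocallyFinite]

theorem ncard_neighborSet_eq_degree (x : V) : (G.neighborSet x).ncard = G.degree x := by
  rw [← coe_neighborFinset, Set.ncard_coe_finset, card_neighborFinset_eq_degree]

variable [DecidableEq V]

theorem ncard_neighborSet_between {s t : Finset V} (h : Disjoint s t) {x : V} (hx : x ∈ s) :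
    ((G.between s t).neighborSet x).ncard = #(G.neighborFinset x ∩ t) := by
  rw [← Set.ncard_coe_finset]
  congr 1
  ext y
  simp [between_adj, Finset.disjoint_left.1 h hx, hx]

variable [DecidableRel G.Adj]

theorem card_interedges_eq_sum (s t : Finset V) :
    #(G.interedges s t) = ∑ x ∈ s, #(G.neighborFinset x ∩ t) := by
  rw [interedges_def, card_filter, sum_product]
  refine sum_congr rfl fun x _ => ?_
  rw [← card_filter, inter_comm, ← filter_mem_eq_inter]
  simp only [mem_neighborFinset]

theorem card_interedges_insert_left {v : V} {s : Finset V} (hv : v ∉ s) (t : Finset V) :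
    #(G.interedges (insert v s) t) = #(G.neighborFinset v ∩ t) + #(G.interedges s t) := by
  simp only [card_interedges_eq_sum, sum_insert hv]

theorem card_interedges_insert_right (s : Finset V) {v : V} {t : Finset V} (hv : v ∉ t) :
    #(G.interedges s (insert v t)) = #(G.neighborFinset v ∩ s) + #(G.interedges s t) := by
  rw [card_interedges_comm, card_interedges_insert_left G hv, card_interedges_comm]

theorem card_interedges_insert_self {v : V} {s : Finset V} (hv : v ∉ s) :
    #(G.interedges (insert v s) (insert v s)) =
      #(G.interedges s s) + 2 * #(G.neighborFinset v ∩ s) := by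
  have hloop : G.neighborFinset v ∩ insert v s = G.neighborFinset v ∩ s :=
    inter_insert_of_notMem (by simp)
  rw [card_interedges_insert_left G hv, card_interedges_insert_right G s hv, hloop]
  ring

/-- `G.interedges s s` counts every edge of `G[s]` twice, so this says that some cut of `G[s]`
contains half of its edges. -/
theorem exists_card_interedges_self_le_four_mul (s : Finset V) :
    ∃ u ⊆ s, #(G.interedges s s) ≤ 4 * #(G.interedges u (s \ u)) := by
  induction s using Finset.induction_on with
  | empty => exact ⟨∅, subset_rfl, by simp [interedges_empty_left]⟩
  | @insert v s hv ih =>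
    obtain ⟨u, hus, hu⟩ := ih
    have hvu : v ∉ u := fun h => hv (hus h)
    have hsplit : #(G.neighborFinset v ∩ s) =
        #(G.neighborFinset v ∩ u) + #(G.neighborFinset v ∩ (s \ u)) := by
      rw [← card_union_of_disjoint (disjoint_sdiff.mono inter_subset_right inter_subset_right),
        ← inter_union_distrib_left, union_sdiff_of_subset hus]
    rw [card_interedges_insert_self G hv]
    -- `v` joins the side containing fewer of its neighbours
    rcases le_total #(G.neighborFinset v ∩ u) #(G.neighborFinset v ∩ (s \ u)) with h | h
    · refine ⟨insert v u, insert_subset_insert v hus, ?_⟩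
      rw [insert_sdiff_insert, sdiff_insert_of_notMem hv, card_interedges_insert_left G hvu]
      omega
    · refine ⟨u, hus.trans (subset_insert v s), ?_⟩
      rw [insert_sdiff_of_notMem _ hvu,
        card_interedges_insert_right G u (fun h => hv (mem_sdiff.1 h).1)]
      omega

/-- Deleting a vertex with fewer than `θ` neighbours on the other side costs less than `θ` edges,
so the strict inequality survives every deletion. -/
theorem exists_subsets_le_card_neighborFinset_inter {θ₁ θ₂ : ℝ}
    (hθ₁ : 0 ≤ θ₁) (hθ₂ : 0 ≤ θ₂) (s t : Finset V) (h : #s * θ₁ + #t * θ₂ < #(G.interedges s t)) :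
    ∃ s' ⊆ s, ∃ t' ⊆ t, (G.interedges s' t').Nonempty ∧
      (∀ x ∈ s', θ₁ ≤ #(G.neighborFinset x ∩ t')) ∧
      ∀ y ∈ t', θ₂ ≤ #(G.neighborFinset y ∩ s') := by
  by_cases hs : ∃ x ∈ s, #(G.neighborFinset x ∩ t) < θ₁
  · obtain ⟨x, hx, hlow⟩ := hs
    have hcard := card_erase_add_one hx
    have hedges := card_interedges_insert_left G (notMem_erase x s) t
    rw [insert_erase hx] at hedges
    obtain ⟨s', hs', t', ht', H⟩ := exists_subsets_le_card_neighborFinset_inter hθ₁ hθ₂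
      (s.erase x) t (by rw [← hcard, hedges] at h; push_cast at h; linarith)
    exact ⟨s', hs'.trans (erase_subset x s), t', ht', H⟩
  by_cases ht : ∃ y ∈ t, #(G.neighborFinset y ∩ s) < θ₂
  · obtain ⟨y, hy, hlow⟩ := ht
    have hcard := card_erase_add_one hy
    have hedges := card_interedges_insert_right G s (notMem_erase y t)
    rw [insert_erase hy] at hedges
    obtain ⟨s', hs', t', ht', H⟩ := exists_subsets_le_card_neighborFinset_inter hθ₁ hθ₂
      s (t.erase y) (by rw [← hcard, hedges] at h; push_cast at h; linarith)
    exact ⟨s', hs', t', ht'.trans (erase_subset y t), H⟩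
  push Not at hs ht
  have hpos : (0 : ℝ) < #(G.interedges s t) := by
    have : (0 : ℝ) ≤ #s * θ₁ + #t * θ₂ := by positivity
    linarith
  exact ⟨s, subset_rfl, t, subset_rfl, card_pos.1 (mod_cast hpos), hs, ht⟩
termination_by #s + #t
decreasing_by
  · have := card_erase_lt_of_mem hx; omega
  · have := card_erase_lt_of_mem hy; omega

theorem card_interedges_eq_sum_fiberwise_left {f : V → ℕ} {T : ℕ} {s : Finset V}
    (hs : ∀ x ∈ s, f x < T) (t : Finset V) :
    #(G.interedges s t) = ∑ i ∈ range T, #(G.interedges {x ∈ s | f x = i} t) := by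
  simp only [card_interedges_eq_sum]
  exact (sum_fiberwise_of_maps_to (fun x hx => mem_range.2 (hs x hx)) _).symm

theorem exists_card_interedges_le_sq_mul_fiber {f : V → ℕ} {T : ℕ} {s t : Finset V}
    (hs : ∀ x ∈ s, f x < T) (ht : ∀ y ∈ t, f y < T) :
    ∃ i j, #(G.interedges s t) ≤
      T ^ 2 * #(G.interedges {x ∈ s | f x = i} {y ∈ t | f y = j}) := by
  rcases T.eq_zero_or_pos with rfl | hT
  · have : s = ∅ := eq_empty_of_forall_notMem fun x hx => Nat.not_lt_zero _ (hs x hx)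
    exact ⟨0, 0, by simp [this, interedges_empty_left]⟩
  have hsum : #(G.interedges s t) =
      ∑ p ∈ range T ×ˢ range T, #(G.interedges {x ∈ s | f x = p.1} {y ∈ t | f y = p.2}) := by
    rw [sum_product, card_interedges_eq_sum_fiberwise_left G hs]
    refine sum_congr rfl fun i _ => ?_
    rw [card_interedges_comm, card_interedges_eq_sum_fiberwise_left G ht]
    simp only [card_interedges_comm G {y ∈ t | f y = _}]
  have hT' : (range T).Nonempty := nonempty_range_iff.2 hT.ne'
  obtain ⟨p, -, hp⟩ := exists_le_of_sum_le (hT'.product hT')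
    (f := fun _ => #(G.interedges s t))
    (g := fun p => T ^ 2 * #(G.interedges {x ∈ s | f x = p.1} {y ∈ t | f y = p.2}))
    (by rw [sum_const, card_product, card_range, smul_eq_mul, ← mul_sum, ← hsum, sq])
  exact ⟨p.1, p.2, hp⟩

end LocallyFinite

section Fintype

variable [Fintype V] [DecidableRel G.Adj]

theorem two_le_card_of_card_edgeFinset_pos (he : 0 < #G.edgeFinset) : 2 ≤ Fintype.card V := by
  by_contra! h
  have := G.card_edgeFinset_le_card_choose_two
  rw [Nat.choose_eq_zero_of_lt h] at this
  omega

theorem card_mul_le_two_mul_card_edgeFinset {s : Finset V} {m : ℕ}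
    (h : ∀ x ∈ s, m ≤ G.degree x) : #s * m ≤ 2 * #G.edgeFinset :=
  calc #s * m ≤ ∑ x ∈ s, G.degree x := card_nsmul_le_sum s _ m h
    _ ≤ ∑ x, G.degree x := sum_le_univ_sum_of_nonneg fun _ => Nat.zero_le _
    _ = 2 * #G.edgeFinset := G.sum_degrees_eq_twice_card_edges

variable [DecidableEq V]

theorem card_interedges_univ_right (s : Finset V) :
    #(G.interedges s univ) = ∑ x ∈ s, G.degree x := by
  simp only [card_interedges_eq_sum, inter_univ, card_neighborFinset_eq_degree]

theorem two_mul_card_edgeFinset_le (s : Finset V) :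
    2 * #G.edgeFinset ≤ #(G.interedges s s) + 2 * ∑ x ∈ sᶜ, G.degree x := by
  have hs : ∑ x ∈ s, G.degree x = #(G.interedges s s) + #(G.interedges s sᶜ) := by
    simp only [card_interedges_eq_sum, ← sum_add_distrib, ← sdiff_eq_inter_compl,
      card_inter_add_card_sdiff, card_neighborFinset_eq_degree]
  have hsc : #(G.interedges s sᶜ) ≤ ∑ x ∈ sᶜ, G.degree x := by
    rw [card_interedges_comm, ← card_interedges_univ_right]
    exact card_le_card (G.interedges_mono subset_rfl (subset_univ s))
  rw [← G.sum_degrees_eq_twice_card_edges, ← sum_add_sum_compl s]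
  omega

theorem card_edgeFinset_le_card_interedges_filter_degree {c : ℝ} (hc : 0 ≤ c)
    (hcn : Fintype.card V * c ≤ #G.edgeFinset / 2) :
    #G.edgeFinset ≤ #(G.interedges {v | c ≤ G.degree v} {v | c ≤ G.degree v}) := by
  set W : Finset V := {v | c ≤ G.degree v}
  have hlow : (∑ x ∈ Wᶜ, G.degree x : ℝ) ≤ Fintype.card V * c :=
    calc (∑ x ∈ Wᶜ, G.degree x : ℝ) ≤ ∑ _x ∈ Wᶜ, c :=
          sum_le_sum fun x hx => by
            simp only [W, mem_compl, mem_filter_univ, not_le] at hx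
            exact hx.le
      _ ≤ Fintype.card V * c := by
          rw [sum_const, nsmul_eq_mul]
          exact mul_le_mul_of_nonneg_right (mod_cast card_le_univ _) hc
  have : (2 * #G.edgeFinset : ℝ) ≤ #(G.interedges W W) + 2 * ∑ x ∈ Wᶜ, (G.degree x : ℝ) :=
    mod_cast G.two_mul_card_edgeFinset_le W
  exact_mod_cast (by linarith : (#G.edgeFinset : ℝ) ≤ #(G.interedges W W))

theorem exists_dyadic_pair {c : ℝ} (hc : 0 < c)
    (hcn : Fintype.card V * c ≤ #G.edgeFinset / 2) :
    ∃ s t : Finset V, ∃ i j : ℕ, Disjoint s t ∧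
      #G.edgeFinset ≤ 4 * (Nat.log 2 (Fintype.card V) + 1) ^ 2 * #(G.interedges s t) ∧
      (∀ x ∈ s, c ≤ G.degree x ∧ 2 ^ i ≤ G.degree x ∧ G.degree x < 2 ^ (i + 1)) ∧
      ∀ y ∈ t, c ≤ G.degree y ∧ 2 ^ j ≤ G.degree y ∧ G.degree y < 2 ^ (j + 1) := by
  set W : Finset V := {v | c ≤ G.degree v}
  have hW := G.card_edgeFinset_le_card_interedges_filter_degree hc.le hcn
  have hclass : ∀ x ∈ W, ∀ k, Nat.log 2 (G.degree x) = k →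
      c ≤ G.degree x ∧ 2 ^ k ≤ G.degree x ∧ G.degree x < 2 ^ (k + 1) := by
    intro x hx k hk
    have hcx : c ≤ G.degree x := by simpa [W] using hx
    have hx0 : G.degree x ≠ 0 := (Nat.cast_pos.1 (hc.trans_le hcx)).ne'
    exact ⟨hcx, (Nat.log_eq_iff (Or.inr ⟨one_lt_two, hx0⟩)).1 hk⟩
  obtain ⟨u, huW, hu⟩ := G.exists_card_interedges_self_le_four_mul W
  have hlog : ∀ x, Nat.log 2 (G.degree x) < Nat.log 2 (Fintype.card V) + 1 := fun x =>
    Nat.lt_succ_of_le (Nat.log_mono_right (G.degree_lt_card_verts x).le)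
  obtain ⟨i, j, hij⟩ := G.exists_card_interedges_le_sq_mul_fiber (s := u) (t := W \ u)
    (fun x _ => hlog x) (fun y _ => hlog y)
  refine ⟨{x ∈ u | Nat.log 2 (G.degree x) = i}, {y ∈ W \ u | Nat.log 2 (G.degree y) = j},
    i, j, disjoint_sdiff.mono (filter_subset _ _) (filter_subset _ _), ?_,
    fun x hx => hclass x (huW (mem_filter.1 hx).1) i (mem_filter.1 hx).2,
    fun y hy => hclass y (sdiff_subset (mem_filter.1 hy).1) j (mem_filter.1 hy).2⟩
  calc #G.edgeFinset ≤ 4 * #(G.interedges u (W \ u)) := hW.trans hu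
    _ ≤ _ := by rw [mul_assoc]; exact Nat.mul_le_mul_left 4 hij

theorem exists_bipartite_core {c : ℝ} (hc : 0 < c)
    (hcn : Fintype.card V * c ≤ #G.edgeFinset / 2) (he : 0 < #G.edgeFinset) :
    ∃ s t : Finset V, ∃ D₁ D₂ : ℝ, c ≤ D₁ ∧ c ≤ D₂ ∧ Disjoint s t ∧
      (G.interedges s t).Nonempty ∧
      (∀ x ∈ s, D₁ / (256 * logb 2 (Fintype.card V) ^ 2) ≤ #(G.neighborFinset x ∩ t) ∧
        G.degree x ≤ D₁) ∧
      ∀ y ∈ t, D₂ / (256 * logb 2 (Fintype.card V) ^ 2) ≤ #(G.neighborFinset y ∩ s) ∧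
        G.degree y ≤ D₂ := by
  obtain ⟨s, t, i, j, hst, hcount, hs, ht⟩ := G.exists_dyadic_pair hc hcn
  set L := logb 2 (Fintype.card V)
  have hT := natLog_add_one_le_two_mul_logb (G.two_le_card_of_card_edgeFinset_pos he)
  have hL : 0 < L := by linarith [(Nat.log 2 (Fintype.card V)).cast_nonneg (α := ℝ)]
  have hdense : (#G.edgeFinset : ℝ) ≤ 16 * L ^ 2 * #(G.interedges s t) :=
    calc (#G.edgeFinset : ℝ)
        ≤ 4 * (Nat.log 2 (Fintype.card V) + 1 : ℝ) ^ 2 * #(G.interedges s t) := by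
          exact_mod_cast hcount
      _ ≤ 4 * (2 * L) ^ 2 * #(G.interedges s t) := by gcongr
      _ = 16 * L ^ 2 * #(G.interedges s t) := by ring
  have hsize : ∀ (u : Finset V) (k : ℕ), (∀ x ∈ u, 2 ^ k ≤ G.degree x) →
      (#u * 2 ^ (k + 1) : ℝ) ≤ 4 * #G.edgeFinset := by
    intro u k hu
    have h : (#u * 2 ^ k : ℝ) ≤ 2 * #G.edgeFinset :=
      mod_cast G.card_mul_le_two_mul_card_edgeFinset hu
    rw [pow_succ]
    linarith
  have hbudget : #s * ((2 : ℝ) ^ (i + 1) / (256 * L ^ 2)) +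
      #t * ((2 : ℝ) ^ (j + 1) / (256 * L ^ 2)) < #(G.interedges s t) := by
    rw [mul_div_assoc', mul_div_assoc', ← add_div, div_lt_iff₀ (by positivity)]
    linarith [hsize s i fun x hx => (hs x hx).2.1, hsize t j fun y hy => (ht y hy).2.1,
      (by exact_mod_cast he : (0 : ℝ) < #G.edgeFinset)]
  obtain ⟨s', hs', t', ht', ⟨⟨x, y⟩, hxy⟩, hs'deg, ht'deg⟩ :=
    G.exists_subsets_le_card_neighborFinset_inter (by positivity) (by positivity) s t hbudget
  have hx : x ∈ s := hs' ((G.mk_mem_interedges_iff).1 hxy).1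
  have hy : y ∈ t := ht' ((G.mk_mem_interedges_iff).1 hxy).2.1
  have hsup : ∀ x ∈ s, (G.degree x : ℝ) ≤ 2 ^ (i + 1) :=
    fun x hx => mod_cast (hs x hx).2.2.le
  have htup : ∀ y ∈ t, (G.degree y : ℝ) ≤ 2 ^ (j + 1) :=
    fun y hy => mod_cast (ht y hy).2.2.le
  exact ⟨s', t', 2 ^ (i + 1), 2 ^ (j + 1), (hs x hx).1.trans (hsup x hx),
    (ht y hy).1.trans (htup y hy), hst.mono hs' ht', ⟨_, hxy⟩,
    fun x hx => ⟨hs'deg x hx, hsup x (hs' hx)⟩,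
    fun y hy => ⟨ht'deg y hy, htup y (ht' hy)⟩⟩

end Fintype

end SimpleGraph

/-- Lemma 2.3: existence of an almost-biregular bipartite subgraph. -/
theorem statement_5 {V : Type*} [Fintype V] (n : ℕ) (hn : Fintype.card V = n)
    (G : SimpleGraph V) (d : ℝ) (hd : d = 2 * (G.edgeSet.ncard : ℝ) / (n : ℝ)) (hd0 : 0 < d) :
    ∃ D₁ D₂ : ℝ, d / 4 ≤ D₁ ∧ d / 4 ≤ D₂ ∧
      ∃ (G' : SimpleGraph V) (X₁ X₂ : Set V), G' ≤ G ∧ G' ≠ ⊥ ∧ Disjoint X₁ X₂ ∧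
        (∀ u v, G'.Adj u v → (u ∈ X₁ ∧ v ∈ X₂) ∨ (u ∈ X₂ ∧ v ∈ X₁)) ∧
        (∀ x ∈ X₁, D₁ / (256 * (Real.logb 2 n) ^ 2) ≤ ((G'.neighborSet x).ncard : ℝ) ∧
          ((G.neighborSet x).ncard : ℝ) ≤ D₁) ∧
        (∀ x ∈ X₂, D₂ / (256 * (Real.logb 2 n) ^ 2) ≤ ((G'.neighborSet x).ncard : ℝ) ∧
          ((G.neighborSet x).ncard : ℝ) ≤ D₂) := by
  classical
  subst hn hd
  rw [← SimpleGraph.coe_edgeFinset, Set.ncard_coe_finset] at hd0 ⊢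
  obtain ⟨he, hV⟩ : (0 : ℝ) < #G.edgeFinset ∧ (0 : ℝ) < Fintype.card V := by
    rcases div_pos_iff.1 hd0 with h | h
    · exact ⟨by linarith, h.2⟩
    · exact absurd h.2 (not_lt.2 (Nat.cast_nonneg _))
  obtain ⟨s, t, D₁, D₂, hD₁, hD₂, hst, ⟨⟨x, y⟩, hxy⟩, hs, ht⟩ :=
    G.exists_bipartite_core (c := 2 * #G.edgeFinset / Fintype.card V / 4) (by positivity)
      (by field_simp; linarith) (mod_cast he)
  rw [SimpleGraph.mk_mem_interedges_iff] at hxy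
  refine ⟨D₁, D₂, hD₁, hD₂, G.between s t, s, t, SimpleGraph.between_le,
    SimpleGraph.ne_bot_iff_exists_adj.2 ⟨x, y, hxy.2.2, .inl ⟨hxy.1, hxy.2.1⟩⟩,
    disjoint_coe.2 hst, fun u v h => h.2, fun x hx => ?_, fun y hy => ?_⟩
  · rw [G.ncard_neighborSet_between hst hx, G.ncard_neighborSet_eq_degree]
    exact hs x hx
  · rw [SimpleGraph.between_comm, G.ncard_neighborSet_between hst.symm hy,
      G.ncard_neighborSet_eq_degree]
    exact ht y hy
end

section
/- Let G be a bipartite graph with parts X and Y such that every vertex x ∈ X has degree at least s and every vertex y ∈ Y has degree at least t. Then for every positive integer k, hom(C_{2k}, G) ≥ s^k · t^k. -/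
/-!
Let `A` be the adjacency matrix and `f` the indicator vector of the non-isolated vertices. Then
`A f` is the degree vector, and since every edge `uv` has `deg u * deg v ≥ s t`, every
non-isolated `u` satisfies `∑_{v ~ u} deg v ≥ s t`; hence `|A f|² = ⟪f, A (A f)⟫ ≥ s t |f|²`.
By Cauchy–Schwarz the moments `|A^j f|²` are log-convex in `j`, so `|A^k f|² ≥ (s t)^k |f|²`,
while `|A^k f|² ≤ |f|² tr A^{2k}`. Finally `tr A^{2k}` counts closed walks of length `2k`,
and each of them is a homomorphic `2k`-cycle.
-/

open Real

open Matrix Finset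

section Matrix

variable {n m : Type*} [Fintype n] [Fintype m]

theorem Matrix.mulVec_dotProduct_mulVec_self_le (M : Matrix m n ℝ) (f : n → ℝ) :
    (M *ᵥ f) ⬝ᵥ (M *ᵥ f) ≤ (f ⬝ᵥ f) * (M * Mᵀ).trace := by
  simp only [dotProduct, mulVec, trace, diag, mul_apply, transpose_apply, ← sq]
  rw [mul_sum]
  exact sum_le_sum fun i _ =>
    (sum_mul_sq_le_sq_mul_sq univ (fun j => M i j) f).trans_eq (mul_comm _ _)

theorem Matrix.IsSymm.mulVec_dotProduct {A : Matrix n n ℝ} (hA : A.IsSymm) (f g : n → ℝ) :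
    (A *ᵥ f) ⬝ᵥ g = f ⬝ᵥ (A *ᵥ g) := by
  rw [dotProduct_mulVec, ← mulVec_transpose, hA.eq, dotProduct_comm]

theorem pow_mul_le_of_sq_le_mul {a : ℕ → ℝ} {c : ℝ} (hc : 0 ≤ c) (ha : ∀ j, 0 ≤ a j)
    (hlog : ∀ j, a (j + 1) ^ 2 ≤ a j * a (j + 2)) (h₁ : c * a 0 ≤ a 1) (j : ℕ) :
    c ^ j * a 0 ≤ a j := by
  have hratio : ∀ j, c * a j ≤ a (j + 1) := by
    intro j
    induction j with
    | zero => exact h₁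
    | succ j ih =>
      rcases (ha j).eq_or_lt with hj | hj
      · have hsq := hlog j
        rw [← hj, zero_mul] at hsq
        rw [pow_eq_zero_iff two_ne_zero |>.mp (le_antisymm hsq (sq_nonneg _)), mul_zero]
        exact ha _
      · refine le_of_mul_le_mul_left ?_ hj
        calc a j * (c * a (j + 1)) = c * a j * a (j + 1) := by ring
          _ ≤ a (j + 1) ^ 2 := by rw [sq]; exact mul_le_mul_of_nonneg_right ih (ha _)
          _ ≤ a j * a (j + 2) := hlog j
  induction j with
  | zero => simp
  | succ j ih => calc
      c ^ (j + 1) * a 0 = c * (c ^ j * a 0) := by ring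
      _ ≤ c * a j := mul_le_mul_of_nonneg_left ih hc
      _ ≤ a (j + 1) := hratio j

theorem Matrix.IsSymm.sq_dotProduct_pow_mulVec_le {A : Matrix n n ℝ} (hA : A.IsSymm)
    [DecidableEq n] (f : n → ℝ) (j : ℕ) :
    ((A ^ (j + 1) *ᵥ f) ⬝ᵥ (A ^ (j + 1) *ᵥ f)) ^ 2 ≤
      ((A ^ j *ᵥ f) ⬝ᵥ (A ^ j *ᵥ f)) * ((A ^ (j + 2) *ᵥ f) ⬝ᵥ (A ^ (j + 2) *ᵥ f)) := by
  have hshift :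
      (A ^ (j + 1) *ᵥ f) ⬝ᵥ (A ^ (j + 1) *ᵥ f) = (A ^ j *ᵥ f) ⬝ᵥ (A ^ (j + 2) *ᵥ f) := by
    have hsucc : ∀ i, A ^ (i + 1) *ᵥ f = A *ᵥ (A ^ i *ᵥ f) := fun i => by
      rw [mulVec_mulVec, pow_succ']
    rw [hsucc (j + 1), ← hA.mulVec_dotProduct, ← hsucc j]
  rw [hshift]
  simpa only [dotProduct, sq] using
    sum_mul_sq_le_sq_mul_sq univ (A ^ j *ᵥ f) (A ^ (j + 2) *ᵥ f)

theorem Matrix.IsSymm.pow_le_trace_pow {A : Matrix n n ℝ} (hA : A.IsSymm) [DecidableEq n]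
    {f : n → ℝ} (hf : f ≠ 0) {c : ℝ} (hc : 0 ≤ c)
    (h : c * (f ⬝ᵥ f) ≤ (A *ᵥ f) ⬝ᵥ (A *ᵥ f)) (k : ℕ) :
    c ^ k ≤ (A ^ (2 * k)).trace := by
  have hmoment := pow_mul_le_of_sq_le_mul (a := fun j => (A ^ j *ᵥ f) ⬝ᵥ (A ^ j *ᵥ f)) hc
    (fun j => sum_nonneg fun i _ => mul_self_nonneg _) (hA.sq_dotProduct_pow_mulVec_le f)
    (by simpa using h) k
  have hf : 0 < f ⬝ᵥ f := by simpa using dotProduct_self_star_pos_iff.mpr hf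
  have hgram : A ^ k * (A ^ k)ᵀ = A ^ (2 * k) := by rw [(hA.pow k).eq, ← pow_add, two_mul]
  refine le_of_mul_le_mul_right ?_ hf
  calc c ^ k * (f ⬝ᵥ f) ≤ (A ^ k *ᵥ f) ⬝ᵥ (A ^ k *ᵥ f) := by simpa using hmoment
    _ ≤ (f ⬝ᵥ f) * (A ^ (2 * k)).trace := hgram ▸ (A ^ k).mulVec_dotProduct_mulVec_self_le f
    _ = (A ^ (2 * k)).trace * (f ⬝ᵥ f) := mul_comm _ _

end Matrix

namespace SimpleGraph

variable {V : Type*} {G : SimpleGraph V}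

theorem Walk.adj_getVert_val_add_one {u : V} {m : ℕ} [NeZero m] (p : G.Walk u u)
    (hp : p.length = m) (i : ZMod m) : G.Adj (p.getVert i.val) (p.getVert (i + 1).val) := by
  have hval : (i + 1).val = (i.val + 1) % m := by
    rw [← ZMod.val_natCast, Nat.cast_add, ZMod.natCast_zmod_val, Nat.cast_one]
  have hadj := p.adj_getVert_succ (i := i.val) (by rw [hp]; exact ZMod.val_lt i)
  rcases (Nat.succ_le_of_lt (ZMod.val_lt i)).lt_or_eq with hlt | heq
  · rwa [hval, Nat.mod_eq_of_lt hlt]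
  · rw [hval, ← Nat.succ_eq_add_one, heq, Nat.mod_self, Walk.getVert_zero]
    rwa [← Nat.succ_eq_add_one, heq, show p.getVert m = u from hp ▸ p.getVert_length] at hadj

def closedWalkToCycle {m : ℕ} [NeZero m] (w : Σ u : V, {p : G.Walk u u | p.length = m}) :
    {x : ZMod m → V // ∀ i, G.Adj (x i) (x (i + 1))} :=
  ⟨fun i => w.2.1.getVert i.val, w.2.1.adj_getVert_val_add_one w.2.2⟩

theorem closedWalkToCycle_injective {m : ℕ} [NeZero m] :
    Function.Injective (closedWalkToCycle (G := G) (m := m)) := by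
  rintro ⟨u, p, hp : p.length = m⟩ ⟨u', q, hq : q.length = m⟩ heq
  have hvert : ∀ i : ZMod m, p.getVert i.val = q.getVert i.val :=
    congrFun (congrArg Subtype.val heq)
  obtain rfl : u = u' := by simpa using hvert 0
  obtain rfl : p = q := Walk.ext_getVert_le_length (hp.trans hq.symm) fun i hi => by
    rcases hi.lt_or_eq with hi | rfl
    · simpa [ZMod.val_natCast, Nat.mod_eq_of_lt (hp ▸ hi)] using hvert i
    · rw [Walk.getVert_length, Walk.getVert_of_length_le _ (hq.trans hp.symm).le]
  rfl

theorem trace_adjMatrix_pow_le_homCount [Fintype V] [DecidableEq V] [DecidableRel G.Adj]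
    {m : ℕ} (hm : m ≠ 0) : (G.adjMatrix ℝ ^ m).trace ≤ Paper.homCount G m := by
  have : NeZero m := ⟨hm⟩
  have hcard := Nat.card_le_card_of_injective _ (closedWalkToCycle_injective (G := G) (m := m))
  rw [Nat.card_eq_fintype_card, Fintype.card_sigma] at hcard
  simp only [trace, Matrix.diag, adjMatrix_pow_apply_eq_card_walk]
  exact_mod_cast hcard

section Degree

variable [Fintype V] [DecidableRel G.Adj]

theorem le_sum_degree_neighborFinset {c : ℕ}
    (hc : ∀ u v, G.Adj u v → c ≤ G.degree u * G.degree v) {u : V} (hu : 0 < G.degree u) :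
    c ≤ ∑ v ∈ G.neighborFinset u, G.degree v := by
  refine Nat.le_of_mul_le_mul_left ?_ hu
  calc G.degree u * c = ∑ _v ∈ G.neighborFinset u, c := by
        rw [sum_const, card_neighborFinset_eq_degree, smul_eq_mul]
    _ ≤ ∑ v ∈ G.neighborFinset u, G.degree u * G.degree v :=
        sum_le_sum fun v hv => hc u v ((mem_neighborFinset G u v).mp hv)
    _ = G.degree u * ∑ v ∈ G.neighborFinset u, G.degree v := (mul_sum _ _ _).symm

theorem pow_le_trace_adjMatrix_pow [DecidableEq V] {c : ℕ}
    (hc : ∀ u v, G.Adj u v → c ≤ G.degree u * G.degree v) {x : V} (hx : 0 < G.degree x)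
    (k : ℕ) : (c : ℝ) ^ k ≤ (G.adjMatrix ℝ ^ (2 * k)).trace := by
  set S := univ.filter fun v => 0 < G.degree v
  set f : V → ℝ := fun v => if v ∈ S then 1 else 0
  have hdot : ∀ g : V → ℝ, f ⬝ᵥ g = ∑ u ∈ S, g u := fun g => by
    simp [f, dotProduct, ite_mul, sum_ite_mem]
  have hAf : G.adjMatrix ℝ *ᵥ f = fun v => (G.degree v : ℝ) := by
    ext v
    rw [adjMatrix_mulVec_apply, ← card_neighborFinset_eq_degree, ← Nat.smul_one_eq_cast,
      ← sum_const]
    refine sum_congr rfl fun u hu => if_pos (mem_filter.mpr ⟨mem_univ u, ?_⟩)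
    exact G.degree_pos_iff_exists_adj u |>.mpr ⟨v, (G.mem_neighborFinset v u).mp hu |>.symm⟩
  refine G.isSymm_adjMatrix.pow_le_trace_pow (f := f) (fun hf => ?_) c.cast_nonneg ?_ k
  · simpa [f, S, hx] using congrFun hf x
  rw [G.isSymm_adjMatrix.mulVec_dotProduct, hAf, hdot, hdot]
  calc (c : ℝ) * ∑ u ∈ S, f u = ∑ u ∈ S, (c : ℝ) := by
        rw [mul_sum]; exact sum_congr rfl fun u hu => by simp [f, hu]
    _ ≤ ∑ u ∈ S, (G.adjMatrix ℝ *ᵥ fun v => (G.degree v : ℝ)) u := by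
        refine sum_le_sum fun u hu => ?_
        rw [adjMatrix_mulVec_apply, ← Nat.cast_sum]
        exact_mod_cast G.le_sum_degree_neighborFinset hc (mem_filter.mp hu).2

theorem pow_le_homCount_of_le_degree_mul_degree {c : ℕ}
    (hc : ∀ u v, G.Adj u v → c ≤ G.degree u * G.degree v) {x : V} (hx : 0 < G.degree x)
    {k : ℕ} (hk : k ≠ 0) : c ^ k ≤ Paper.homCount G (2 * k) := by
  classical
  exact_mod_cast (G.pow_le_trace_adjMatrix_pow hc hx k).trans
    (trace_adjMatrix_pow_le_homCount (by omega))

end Degree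

end SimpleGraph

theorem statement_6_general {V : Type*} [Fintype V] (G : SimpleGraph V) (X Y : Set V)
    (hX : X.Nonempty)
    (hbip : ∀ u v, G.Adj u v → (u ∈ X ∧ v ∈ Y) ∨ (u ∈ Y ∧ v ∈ X))
    (s t : ℕ) (hs : ∀ x ∈ X, s ≤ (G.neighborSet x).ncard)
    (ht : ∀ y ∈ Y, t ≤ (G.neighborSet y).ncard)
    (k : ℕ) (hk : 0 < k) :
    s ^ k * t ^ k ≤ Paper.homCount G (2 * k) := by
  classical
  have hdeg : ∀ v, (G.neighborSet v).ncard = G.degree v := fun v => by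
    rw [← Nat.card_coe_set_eq, Nat.card_eq_fintype_card, G.card_neighborSet_eq_degree]
  simp only [hdeg] at hs ht
  rcases Nat.eq_zero_or_pos s with rfl | hs₀
  · simp [zero_pow hk.ne']
  obtain ⟨x, hx⟩ := hX
  have hedge : ∀ u v, G.Adj u v → s * t ≤ G.degree u * G.degree v := fun u v huv => by
    rcases hbip u v huv with ⟨hu, hv⟩ | ⟨hu, hv⟩
    · exact Nat.mul_le_mul (hs u hu) (ht v hv)
    · exact (Nat.mul_comm s t).trans_le (Nat.mul_le_mul (ht u hu) (hs v hv))
  rw [← mul_pow]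
  exact G.pow_le_homCount_of_le_degree_mul_degree hedge (hs₀.trans_le (hs x hx)) hk.ne'

/-- Lemma 2.4: `hom(C_{2k}, G) ≥ s^k t^k` for bipartite `G` with minimum degree
`s` on side `X` and `t` on side `Y`. -/
theorem statement_6 {V : Type*} [Fintype V] (G : SimpleGraph V) (X Y : Set V)
    (hX : X.Nonempty) (hY : Y.Nonempty)
    (hbip : ∀ u v, G.Adj u v → (u ∈ X ∧ v ∈ Y) ∨ (u ∈ Y ∧ v ∈ X))
    (s t : ℕ) (hs : ∀ x ∈ X, s ≤ (G.neighborSet x).ncard)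
    (ht : ∀ y ∈ Y, t ≤ (G.neighborSet y).ncard)
    (k : ℕ) (hk : 0 < k) :
    s ^ k * t ^ k ≤ Paper.homCount G (2 * k) :=
  statement_6_general G X Y hX hbip s t hs ht k hk
end

section
/- Let G be a graph on n vertices with at least one edge. Then G has a spanning subgraph G' with e(G') ≥ e(G)/2 such that, writing q for the number of copies of C_4 in G', every edge of G' belongs to at most (16·log n / e(G'))·q copies of C_4 in G'. -/
open Real

/-!
Repeatedly delete an edge of the current graph `H` lying in more than an `L / e(H)` fraction of
its copies of `C₄`, where `L = 16 log n`. Each deletion multiplies the number of copies by less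
than `1 - L / e(H) ≤ exp (-L / e(G))`, so once about half of the edges are gone at most
`n ^ 4 exp (-L / 4) < 1` copies remain. A graph without copies of `C₄` has no edge to delete, so
the process stops while at least half of the edges are left. The floors in the definition of the
counts are harmless: `⌊(a - b) / 8⌋ + ⌊b / 8⌋ ≤ ⌊a / 8⌋`.
-/

lemma Real.log_lt_logb_two {x : ℝ} (hx : 1 < x) : log x < logb 2 x := by
  have hlog : 0 < log x := log_pos hx
  rw [logb, lt_div_iff₀ (log_pos one_lt_two)]
  nlinarith [log_two_lt_d9]

lemma lt_one_and_pos_of_mul_lt {x b c : ℝ} (hc : 0 ≤ c) (hbc : b ≤ c) (h : x * c < b) :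
    x < 1 ∧ 0 < c := by
  have hc' : 0 < c := hc.lt_of_ne fun h0 => by subst h0; linarith
  exact ⟨lt_of_mul_lt_mul_right (by linarith) hc, hc'⟩

lemma lt_mul_exp_neg_of_add_le {a b c x : ℝ} (h : a + b ≤ c) (hb : x * c < b) (hc : 0 ≤ c) :
    a < c * exp (-x) := calc
  a < c * (1 - x) := by linarith
  _ ≤ c * exp (-x) := mul_le_mul_of_nonneg_left (by linarith [add_one_le_exp (-x)]) hc

lemma le_mul_exp_neg_sub_one {a b C L m₀ m : ℝ} (hC : 0 ≤ C) (hL : 0 ≤ L) (hm : 0 < m)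
    (hmm₀ : m ≤ m₀) (ha : a ≤ b * exp (-(L / m))) (hb : b ≤ C * exp (-(L * (m₀ - m) / m₀))) :
    a ≤ C * exp (-(L * (m₀ - (m - 1)) / m₀)) := calc
  a ≤ b * exp (-(L / m)) := ha
  _ ≤ C * exp (-(L * (m₀ - m) / m₀)) * exp (-(L / m₀)) :=
    mul_le_mul hb (exp_le_exp.mpr (neg_le_neg (div_le_div_of_nonneg_left hL hm hmm₀)))
      (exp_pos _).le (by positivity)
  _ = C * exp (-(L * (m₀ - (m - 1)) / m₀)) := by
    rw [mul_assoc, ← exp_add]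
    ring_nf

lemma mul_exp_neg_lt_one {C L m d : ℝ} (hC₀ : 0 ≤ C) (hC : C < exp (L / 4)) (hL : 0 ≤ L)
    (hm : 0 < m) (hd : m ≤ 4 * d) : C * exp (-(L * d / m)) < 1 := calc
  C * exp (-(L * d / m)) ≤ C * exp (-(L / 4)) := by
    refine mul_le_mul_of_nonneg_left (exp_le_exp.mpr (neg_le_neg ?_)) hC₀
    rw [le_div_iff₀ hm]
    nlinarith
  _ < exp (L / 4) * exp (-(L / 4)) := by gcongr
  _ = 1 := by rw [← exp_add, add_neg_cancel, exp_zero]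

namespace SimpleGraph

variable {V : Type*} [Finite V]

theorem exists_half_edges_le_forall_le_div_mul (c : SimpleGraph V → ℕ)
    (ce : SimpleGraph V → Sym2 V → ℕ)
    (hdel : ∀ H : SimpleGraph V, ∀ e ∈ H.edgeSet, c (H.deleteEdges {e}) + ce H e ≤ c H)
    {L : ℝ} (hL : 1 ≤ L) (G : SimpleGraph V) (hG : (c G : ℝ) < exp (L / 4)) :
    ∃ G' ≤ G, (G.edgeSet.ncard : ℝ) / 2 ≤ G'.edgeSet.ncard ∧
      ∀ e ∈ G'.edgeSet, (ce G' e : ℝ) ≤ L / G'.edgeSet.ncard * c G' := by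
  set m₀ := G.edgeSet.ncard
  -- a subgraph with the fewest edges among those the deletion process can reach
  obtain ⟨H, ⟨hHG, hHhalf, hHc⟩, hmin⟩ :=
    (measure fun H : SimpleGraph V => H.edgeSet.ncard).wf.has_min
      {H | H ≤ G ∧ (m₀ : ℝ) / 2 ≤ H.edgeSet.ncard ∧
        (c H : ℝ) ≤ c G * exp (-(L * (m₀ - H.edgeSet.ncard) / m₀))}
      ⟨G, le_rfl, half_le_self (Nat.cast_nonneg _), by
        rw [sub_self, mul_zero, zero_div, neg_zero, exp_zero, mul_one]⟩
  refine ⟨H, hHG, hHhalf, fun e he => ?_⟩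
  by_contra! hbad
  set m := H.edgeSet.ncard
  have hsum : (c (H.deleteEdges {e}) : ℝ) + ce H e ≤ c H := by exact_mod_cast hdel H e he
  have hm : (0 : ℝ) < m := by exact_mod_cast (Set.ncard_pos (Set.toFinite _)).mpr ⟨e, he⟩
  have hmm₀ : m ≤ m₀ := Set.ncard_le_ncard (edgeSet_mono hHG)
  obtain ⟨hLm, hcH⟩ := lt_one_and_pos_of_mul_lt (Nat.cast_nonneg _)
    (by linarith [Nat.cast_nonneg (α := ℝ) (c (H.deleteEdges {e}))]) hbad
  have hm1 : 1 < m := by exact_mod_cast hL.trans_lt ((div_lt_one hm).mp hLm)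
  have hdel_edges : (H.deleteEdges {e}).edgeSet.ncard = m - 1 := by
    rw [edgeSet_deleteEdges, Set.ncard_sdiff_singleton_of_mem he]
  by_cases hrec : (m₀ : ℝ) / 2 ≤ (m - 1 : ℕ)
  · refine hmin (H.deleteEdges {e}) ⟨(deleteEdges_le _).trans hHG, by rwa [hdel_edges], ?_⟩
      (show (H.deleteEdges {e}).edgeSet.ncard < m by rw [hdel_edges]; omega)
    rw [hdel_edges, Nat.cast_sub hm1.le, Nat.cast_one]
    exact le_mul_exp_neg_sub_one (Nat.cast_nonneg _) (by linarith) hm (by exact_mod_cast hmm₀)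
      (lt_mul_exp_neg_of_add_le hsum hbad (Nat.cast_nonneg _)).le hHc
  · -- more than a quarter of the edges are gone, so the invariant forces `c H < 1`
    have hquarter : (m₀ : ℝ) ≤ 4 * (m₀ - m) := by
      have h2m : 2 * (m - 1) < m₀ := by
        exact_mod_cast (by linarith : (2 * (m - 1 : ℕ) : ℝ) < m₀)
      have : (m₀ + 4 * m : ℝ) ≤ 4 * m₀ := by exact_mod_cast (by omega : m₀ + 4 * m ≤ 4 * m₀)
      linarith
    have hlt := hHc.trans_lt <| mul_exp_neg_lt_one (Nat.cast_nonneg _) hG (by linarith)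
      (hm.trans_le (by exact_mod_cast hmm₀)) hquarter
    exact hlt.not_ge (Nat.one_le_cast.mpr (by exact_mod_cast hcH))

end SimpleGraph

namespace Paper

variable {V : Type*}

def labelledC4 (H : SimpleGraph V) : Set (ZMod 4 → V) :=
  {x | Function.Injective x ∧ ∀ i, H.Adj (x i) (x (i + 1))}

def labelledC4Through (H : SimpleGraph V) (e : Sym2 V) : Set (ZMod 4 → V) :=
  {x | Function.Injective x ∧ (∀ i, H.Adj (x i) (x (i + 1))) ∧ ∃ i, s(x i, x (i + 1)) = e}

lemma c4Count_eq (H : SimpleGraph V) : c4Count H = (labelledC4 H).ncard / 8 := rfl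

lemma c4CountEdge_eq (H : SimpleGraph V) (e : Sym2 V) :
    c4CountEdge H e = (labelledC4Through H e).ncard / 8 := rfl

lemma labelledC4Through_subset (H : SimpleGraph V) (e : Sym2 V) :
    labelledC4Through H e ⊆ labelledC4 H :=
  fun _ hx => ⟨hx.1, hx.2.1⟩

lemma labelledC4_deleteEdges (H : SimpleGraph V) (e : Sym2 V) :
    labelledC4 (H.deleteEdges {e}) = labelledC4 H \ labelledC4Through H e := by
  ext x
  simp only [labelledC4, labelledC4Through, Set.mem_ofPred_eq, Set.mem_sdiff,
    SimpleGraph.deleteEdges_adj, Set.mem_singleton_iff, not_and, not_exists]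
  constructor
  · rintro ⟨hinj, hadj⟩
    exact ⟨⟨hinj, fun i => (hadj i).1⟩, fun _ _ i => (hadj i).2⟩
  · rintro ⟨⟨hinj, hadj⟩, hnot⟩
    exact ⟨hinj, fun i => ⟨hadj i, hnot hinj hadj i⟩⟩

lemma c4Count_deleteEdges_add_c4CountEdge_le [Finite V] (H : SimpleGraph V) (e : Sym2 V) :
    c4Count (H.deleteEdges {e}) + c4CountEdge H e ≤ c4Count H := by
  have hcard := Set.ncard_sdiff (labelledC4Through_subset H e) (Set.toFinite _)
  have hle := Set.ncard_le_ncard (labelledC4Through_subset H e) (Set.toFinite _)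
  rw [c4Count_eq, c4Count_eq, c4CountEdge_eq, labelledC4_deleteEdges, hcard]
  omega

lemma c4Count_le_card_pow [Finite V] (H : SimpleGraph V) : c4Count H ≤ Nat.card V ^ 4 := by
  rw [c4Count_eq]
  calc (labelledC4 H).ncard / 8 ≤ (labelledC4 H).ncard := Nat.div_le_self _ _
    _ ≤ Nat.card (ZMod 4 → V) := Set.ncard_le_card _
    _ = Nat.card V ^ 4 := by rw [Nat.card_fun, Nat.card_zmod]

end Paper

theorem statement_9_general {V : Type*} [Fintype V] (n : ℕ) (hn : Fintype.card V = n)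
    (G : SimpleGraph V) :
    ∃ G' : SimpleGraph V, G' ≤ G ∧
      (G.edgeSet.ncard : ℝ) / 2 ≤ (G'.edgeSet.ncard : ℝ) ∧
      ∀ e ∈ G'.edgeSet, (Paper.c4CountEdge G' e : ℝ) ≤
        16 * Real.logb 2 n / (G'.edgeSet.ncard : ℝ) * (Paper.c4Count G' : ℝ) := by
  rcases G.edgeSet.eq_empty_or_nonempty with hG | ⟨e, he⟩
  · exact ⟨G, le_rfl, half_le_self (Nat.cast_nonneg _), by simp [hG]⟩
  have hn2 : 2 ≤ n := by
    induction e using Sym2.ind with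
    | _ u v =>
      have : Nontrivial V := ⟨u, v, G.ne_of_adj he⟩
      exact hn ▸ Fintype.one_lt_card
  have hlogb : 1 ≤ logb 2 n := by
    rw [← logb_self_eq_one one_lt_two]
    exact logb_le_logb_of_le one_lt_two two_pos (by exact_mod_cast hn2)
  refine SimpleGraph.exists_half_edges_le_forall_le_div_mul Paper.c4Count Paper.c4CountEdge
    (fun H e _ => Paper.c4Count_deleteEdges_add_c4CountEdge_le H e)
    (by linarith) G ?_
  calc (Paper.c4Count G : ℝ) ≤ (n : ℝ) ^ 4 := by
        exact_mod_cast hn ▸ Nat.card_eq_fintype_card (α := V) ▸ Paper.c4Count_le_card_pow G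
    _ = exp (4 * log n) := by
        rw [show (4 : ℝ) * log n = log ((n : ℝ) ^ 4) by rw [log_pow]; norm_num,
          exp_log (by positivity)]
    _ < exp (16 * logb 2 n / 4) := by
        gcongr
        linarith [log_lt_logb_two (by exact_mod_cast hn2 : (1 : ℝ) < n)]

/-- Lemma 2.9: a spanning subgraph with at least half the edges in which no edge
lies in a large proportion of the `4`-cycles. -/
theorem statement_9 {V : Type*} [Fintype V] (n : ℕ) (hn : Fintype.card V = n)
    (G : SimpleGraph V) (hne : G.edgeSet.Nonempty) :
    ∃ G' : SimpleGraph V, G' ≤ G ∧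
      (G.edgeSet.ncard : ℝ) / 2 ≤ (G'.edgeSet.ncard : ℝ) ∧
      ∀ e ∈ G'.edgeSet, (Paper.c4CountEdge G' e : ℝ) ≤
        16 * Real.logb 2 n / (G'.edgeSet.ncard : ℝ) * (Paper.c4Count G' : ℝ) :=
  statement_9_general n hn G
end

section
/- Let G be a graph, let k be a positive integer and let β > 0. If C₀ ⊆ V(G)^{8k} is non-empty and β-good, then C₀ has a non-empty subset which is β-nice. -/
/-!
When niceness fails at `(i, y, u)`, let `Y` be the set of vectors of `C` agreeing with `y` off
`{i+1, i+2}` and `A ⊆ Y` those with `x (i+1) = u` or `x (i+2) = u`. By (ii) of goodness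
`|A| ≤ 2s`, so `β|Y| < |A|` forces `|Y| < 2s/β =: M`, and we delete `A`. Track
`Φ(C) = ∑ᵢ ∑_w min(|C ∩ keyᵢ⁻¹ w|, M)`, where `keyᵢ x` is `x` restricted off `{i+1, i+2}`:
removing `A` from a fibre of size `< M` lowers `Φ` by at least `|A|`, so `|C| - Φ(C)` never
decreases. By (iii), `Φ(C₀) ≤ 8k · β|C₀|/(16ks) · M = |C₀|`, strictly when `C₀` is not nice,
so the sets obtained this way keep `|C| ≥ |C₀| - Φ(C₀) > 0`.
-/

open Real

open Finset

theorem Finset.sum_add_le_sum_of_le {ι M : Type*} [Fintype ι] [AddCommMonoid M] [PartialOrder M]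
    [IsOrderedAddMonoid M] {f g : ι → M} (h : ∀ i, f i ≤ g i) {a : ι} {d : M}
    (ha : f a + d ≤ g a) : ∑ i, f i + d ≤ ∑ i, g i := by
  classical
  rw [← add_sum_erase _ _ (mem_univ a), ← add_sum_erase _ _ (mem_univ a), add_right_comm]
  exact add_le_add ha (sum_le_sum fun i _ => h i)

open Classical in
lemma sum_min_ncard_fiber_eq_sum_image {α β : Type*} [Fintype β] (f : α → β) (C : Set α)
    {M : ℝ} (hM : 0 ≤ M) :
    ∑ w, min ((C ∩ f ⁻¹' {w}).ncard : ℝ) M =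
      ∑ w ∈ (f '' C).toFinset, min ((C ∩ f ⁻¹' {w}).ncard : ℝ) M := by
  refine (sum_subset (subset_univ _) fun w _ hw => ?_).symm
  rw [Set.mem_toFinset, Set.mem_image] at hw
  have : C ∩ f ⁻¹' {w} = ∅ := Set.eq_empty_of_forall_notMem fun y hy => hw ⟨y, hy.1, hy.2⟩
  simp [this, hM]

section CappedFiberSum

variable {α ι : Type*} [Fintype ι] {κ : ι → Type*} [∀ i, Fintype (κ i)]
  (key : ∀ i, α → κ i) (M : ℝ)

noncomputable def cappedFiberSum (C : Set α) : ℝ :=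
  ∑ i, ∑ w, min ((C ∩ key i ⁻¹' {w}).ncard : ℝ) M

variable {key M}

lemma cappedFiberSum_nonneg (hM : 0 ≤ M) (C : Set α) : 0 ≤ cappedFiberSum key M C :=
  sum_nonneg fun _ _ => sum_nonneg fun _ _ => le_min (Nat.cast_nonneg _) hM

lemma cappedFiberSum_lt {C : Set α} {x : α} (hx : x ∈ C) {i : ι}
    (hsmall : ((C ∩ key i ⁻¹' {key i x}).ncard : ℝ) < M) :
    cappedFiberSum key M C < ∑ i, ((key i '' C).ncard : ℝ) * M := by
  classical
  have hM : 0 ≤ M := hsmall.le.trans' (Nat.cast_nonneg _)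
  unfold cappedFiberSum
  simp only [sum_min_ncard_fiber_eq_sum_image _ C hM, Set.ncard_eq_toFinset_card', ← nsmul_eq_mul,
    ← sum_const]
  refine sum_lt_sum (fun i' _ => sum_le_sum fun _ _ => min_le_right _ _) ⟨i, mem_univ i, ?_⟩
  exact sum_lt_sum (fun _ _ => min_le_right _ _)
    ⟨key i x, Set.mem_toFinset.2 (Set.mem_image_of_mem _ hx), (min_le_left _ _).trans_lt hsmall⟩

variable [Finite α]

lemma cappedFiberSum_diff_add_ncard_le {C A : Set α} {i : ι} {w : κ i}
    (hA : A ⊆ C ∩ key i ⁻¹' {w}) (hsmall : ((C ∩ key i ⁻¹' {w}).ncard : ℝ) ≤ M) :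
    cappedFiberSum key M (C \ A) + A.ncard ≤ cappedFiberSum key M C := by
  have hmono : ∀ i' (w' : κ i'), min (((C \ A) ∩ key i' ⁻¹' {w'}).ncard : ℝ) M ≤
      min ((C ∩ key i' ⁻¹' {w'}).ncard : ℝ) M := fun i' w' =>
    min_le_min_right _ (Nat.cast_le.2 (Set.ncard_le_ncard
      (Set.inter_subset_inter_left _ Set.sdiff_subset)))
  refine Finset.sum_add_le_sum_of_le (a := i) (fun i' => sum_le_sum fun w' _ => hmono i' w') ?_
  refine Finset.sum_add_le_sum_of_le (a := w) (fun w' => hmono i w') ?_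
  have hcard : (((C \ A) ∩ key i ⁻¹' {w}).ncard : ℝ) + A.ncard = (C ∩ key i ⁻¹' {w}).ncard := by
    rw [← Set.inter_sdiff_right_comm, Set.ncard_sdiff hA, Nat.cast_sub (Set.ncard_le_ncard hA)]
    ring
  rw [min_eq_left hsmall, min_eq_left (by linarith [(A.ncard).cast_nonneg (α := ℝ)]), hcard]

theorem exists_nonempty_subset_of_sum_ncard_image_le {P : Set α → Prop} {C₀ : Set α}
    (hne : C₀.Nonempty) (himage : ∑ i, ((key i '' C₀).ncard : ℝ) * M ≤ C₀.ncard)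
    (hremove : ∀ C ⊆ C₀, ¬ P C → ∃ i w, ∃ A ⊆ C ∩ key i ⁻¹' {w}, A.Nonempty ∧
      ((C ∩ key i ⁻¹' {w}).ncard : ℝ) < M) :
    ∃ C ⊆ C₀, C.Nonempty ∧ P C := by
  by_cases hP₀ : P C₀
  · exact ⟨C₀, subset_rfl, hne, hP₀⟩
  obtain ⟨i, w, A, hA, ⟨x, hxA⟩, hsmall⟩ := hremove C₀ subset_rfl hP₀
  obtain ⟨hx, rfl⟩ := hA hxA
  have hM : 0 ≤ M := hsmall.le.trans' (Nat.cast_nonneg _)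
  have hlt := cappedFiberSum_lt hx hsmall
  set D := C₀.ncard - cappedFiberSum key M C₀
  have hD : 0 < D := by linarith
  let S : Set (Set α) := {C | C ⊆ C₀ ∧ cappedFiberSum key M C + D ≤ C.ncard}
  obtain ⟨C, ⟨hCsub, hCinv⟩, hmin⟩ :=
    S.exists_min_image Set.ncard S.toFinite ⟨C₀, subset_rfl, by simp [D]⟩
  have hΦ := cappedFiberSum_nonneg (key := key) hM C
  refine ⟨C, hCsub, Set.nonempty_of_ncard_ne_zero ?_, ?_⟩
  · exact_mod_cast (show (C.ncard : ℝ) ≠ 0 by linarith)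
  by_contra hP
  obtain ⟨i, w, A, hA, hAne, hsmall⟩ := hremove C hCsub hP
  have hdrop := cappedFiberSum_diff_add_ncard_le hA hsmall.le
  have hAC : A ⊆ C := hA.trans Set.inter_subset_left
  have hcard : ((C \ A).ncard : ℝ) = C.ncard - A.ncard := by
    rw [Set.ncard_sdiff hAC, Nat.cast_sub (Set.ncard_le_ncard hAC)]
  have hle := hmin (C \ A) ⟨Set.sdiff_subset.trans hCsub, by linarith⟩
  have hApos : (0 : ℝ) < A.ncard := by exact_mod_cast (Set.ncard_pos).2 hAne
  have : (C.ncard : ℝ) ≤ (C \ A).ncard := by exact_mod_cast hle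
  linarith

end CappedFiberSum

section Restrict

variable {ι V : Type*}

lemma image_restrict_eq_setOf (p : ι → Prop) (C : Set (ι → V)) :
    Subtype.restrict p '' C = {y | ∃ x ∈ C, ∀ j : Subtype p, x j = y j} := by
  ext y
  simp [funext_iff, Subtype.restrict]

lemma setOf_forall_ne_ne_eq_inter_preimage_restrict (C : Set (ι → V)) (a b : ι) (y : ι → V) :
    {x ∈ C | ∀ j, j ≠ a → j ≠ b → x j = y j} =
      C ∩ Subtype.restrict (fun j => j ≠ a ∧ j ≠ b) ⁻¹' {Subtype.restrict _ y} := by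
  ext x
  simp [funext_iff, Subtype.restrict]

variable [Finite ι] [Finite V] {C₀ : Set (ι → V)} {s : ℝ}

lemma ncard_le_of_forall_eq_off (hs : 0 ≤ s)
    (hsb : ∀ y ∈ C₀, ∀ c, (({x ∈ C₀ | ∀ j, j ≠ c → x j = y j}).ncard : ℝ) ≤ s)
    {B : Set (ι → V)} (hB : B ⊆ C₀) (c : ι)
    (hagree : ∀ x ∈ B, ∀ x' ∈ B, ∀ j, j ≠ c → x j = x' j) : (B.ncard : ℝ) ≤ s := by
  obtain rfl | ⟨y, hy⟩ := B.eq_empty_or_nonempty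
  · simpa using hs
  refine (Nat.cast_le.2 (Set.ncard_le_ncard ?_)).trans (hsb y (hB hy) c)
  exact fun x hx => ⟨hB hx, hagree x hx y hy⟩

lemma ncard_setOf_forall_ne_ne_and_eq_or_eq_le (hs : 0 ≤ s)
    (hsb : ∀ y ∈ C₀, ∀ c, (({x ∈ C₀ | ∀ j, j ≠ c → x j = y j}).ncard : ℝ) ≤ s)
    {C : Set (ι → V)} (hC : C ⊆ C₀) (a b : ι) (y : ι → V) (u : V) :
    (({x ∈ C | (∀ j, j ≠ a → j ≠ b → x j = y j) ∧ (x a = u ∨ x b = u)}).ncard : ℝ) ≤ 2 * s := by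
  have hone : ∀ a b,
      (({x ∈ C | (∀ j, j ≠ a → j ≠ b → x j = y j) ∧ x a = u}).ncard : ℝ) ≤ s := fun a b =>
    ncard_le_of_forall_eq_off hs hsb (fun x hx => hC hx.1) b fun x hx x' hx' j hjb => by
      by_cases hja : j = a
      · rw [hja, hx.2.2, hx'.2.2]
      · rw [hx.2.1 j hja hjb, hx'.2.1 j hja hjb]
  have hsplit : {x ∈ C | (∀ j, j ≠ a → j ≠ b → x j = y j) ∧ (x a = u ∨ x b = u)} ⊆
      {x ∈ C | (∀ j, j ≠ a → j ≠ b → x j = y j) ∧ x a = u} ∪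
        {x ∈ C | (∀ j, j ≠ b → j ≠ a → x j = y j) ∧ x b = u} := by
    rintro x ⟨hxC, hxy, hxa | hxb⟩
    · exact Or.inl ⟨hxC, hxy, hxa⟩
    · exact Or.inr ⟨hxC, fun j hjb hja => hxy j hja hjb, hxb⟩
  calc _ ≤ ((_ ∪ _ : Set (ι → V)).ncard : ℝ) := Nat.cast_le.2 (Set.ncard_le_ncard hsplit)
    _ ≤ _ := Nat.cast_le.2 (Set.ncard_union_le _ _)
    _ ≤ 2 * s := by push_cast; linarith [hone a b, hone b a]

end Restrict

section GoodToNice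

open Paper

variable {V : Type*} {k : ℕ} [NeZero (8 * k)] {β s : ℝ}

lemma exists_small_fiber_of_not_isNice [Finite V] (G : SimpleGraph V) (hβ : 0 < β) (hs : 0 ≤ s)
    {C₀ C : Set (ZMod (8 * k) → V)}
    (hcyc : ∀ x ∈ C₀, Function.Injective x ∧ ∀ i, G.Adj (x i) (x (i + 1)))
    (hsb : ∀ y ∈ C₀, ∀ c, (({x ∈ C₀ | ∀ j, j ≠ c → x j = y j}).ncard : ℝ) ≤ s)
    (hC : C ⊆ C₀) (hnot : ¬ IsNice G k β C) :
    ∃ i w, ∃ A ⊆ C ∩ Subtype.restrict (fun j => j ≠ i + 1 ∧ j ≠ i + 2) ⁻¹' {w},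
      A.Nonempty ∧ ((C ∩ Subtype.restrict (fun j => j ≠ i + 1 ∧ j ≠ i + 2) ⁻¹' {w}).ncard : ℝ) <
        2 * s / β := by
  have hviol : ¬ ∀ (i : ZMod (8 * k)) (y : ZMod (8 * k) → V) (u : V), _ :=
    fun h => hnot ⟨fun x hx => hcyc x (hC hx), h⟩
  push Not at hviol
  obtain ⟨i, y, u, hlt⟩ := hviol
  have hA2s := ncard_setOf_forall_ne_ne_and_eq_or_eq_le hs hsb hC (i + 1) (i + 2) y u
  set A := {x ∈ C | (∀ j, j ≠ i + 1 → j ≠ i + 2 → x j = y j) ∧ (x (i + 1) = u ∨ x (i + 2) = u)}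
  have hAY : A ⊆ {x ∈ C | ∀ j, j ≠ i + 1 → j ≠ i + 2 → x j = y j} := fun x hx => ⟨hx.1, hx.2.1⟩
  rw [setOf_forall_ne_ne_eq_inter_preimage_restrict] at hlt hAY
  have hApos : (0 : ℝ) < A.ncard := lt_of_le_of_lt (by positivity) hlt
  refine ⟨i, _, A, hAY, Set.nonempty_of_ncard_ne_zero ?_, ?_⟩
  · exact_mod_cast hApos.ne'
  · rw [lt_div_iff₀ hβ]
    linarith

lemma sum_ncard_image_restrict_mul_le (hβ : 0 < β) (hs : 0 < s) {C₀ : Set (ZMod (8 * k) → V)}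
    (himage : ∀ i : ZMod (8 * k), (({y : {j : ZMod (8 * k) // j ≠ i + 1 ∧ j ≠ i + 2} → V |
        ∃ x ∈ C₀, ∀ j : {j : ZMod (8 * k) // j ≠ i + 1 ∧ j ≠ i + 2}, x j.1 = y j}).ncard : ℝ)
      ≤ β * (C₀.ncard : ℝ) / (16 * (k : ℝ) * s)) :
    ∑ i : ZMod (8 * k), ((Subtype.restrict (fun j => j ≠ i + 1 ∧ j ≠ i + 2) '' C₀).ncard : ℝ) *
      (2 * s / β) ≤ C₀.ncard := by
  have hk : (k : ℝ) ≠ 0 := by exact_mod_cast right_ne_zero_of_mul (NeZero.ne (8 * k))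
  calc _ ≤ ∑ _i : ZMod (8 * k), β * (C₀.ncard : ℝ) / (16 * (k : ℝ) * s) * (2 * s / β) :=
        sum_le_sum fun i _ => mul_le_mul_of_nonneg_right
          ((image_restrict_eq_setOf _ C₀).symm ▸ himage i) (by positivity)
    _ = C₀.ncard := by
        rw [sum_const, card_univ, ZMod.card, nsmul_eq_mul]
        push_cast
        field_simp
        ring

end GoodToNice

/-- Lemma 2.12: every non-empty `β`-good set has a non-empty `β`-nice subset. -/
theorem statement_12 {V : Type*} [Fintype V] (G : SimpleGraph V) (k : ℕ) (hk : 0 < k)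
    (β : ℝ) (hβ : 0 < β) (C₀ : Set (ZMod (8 * k) → V)) (hne : C₀.Nonempty)
    (hgood : Paper.IsGood G k β C₀) :
    ∃ C ⊆ C₀, C.Nonempty ∧ Paper.IsNice G k β C := by
  have : NeZero (8 * k) := ⟨by omega⟩
  obtain ⟨s, hs, hcyc, hsb, himage⟩ := hgood
  exact exists_nonempty_subset_of_sum_ncard_image_le
    (key := fun i => Subtype.restrict (fun j => j ≠ i + 1 ∧ j ≠ i + 2)) hne
    (sum_ncard_image_restrict_mul_le hβ hs himage)
    fun C hC hnot => exists_small_fiber_of_not_isNice G hβ hs.le hcyc hsb hC hnot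
end

section
/- Let ε, K > 0 be constants with ε < 1/6. Let n be sufficiently large in terms of ε and K, and let G be an n-vertex graph with Δ(G) ≤ K·n^{1/3+ε}. Assume G has q copies of C_4 and every edge of G is contained in at most (96·log n / n^{4/3+ε})·q copies of C_4. Then there exist a vertex v ∈ V(G), a real number s > 0 and a symmetric set D ⊆ V(G)^3 of size at least q/(n·log n) such that: (1) for each (x, y, z) ∈ D, the vertices v, x, y, z are distinct and form a 4-cycle in this order (i.e. vx, xy, yz, zv are all edges); (2) for each (x, y, z) ∈ D, d(v, y) ≤ s and d(x, z) ≤ s; (3) for every fixed x ∈ V(G), there are at most 384·(log n)·q/(n^{4/3+ε}·s) vertices y ∈ V(G) for which there exists z ∈ V(G) with (x, y, z) ∈ D. -/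
open Real

/-!
Root every four-cycle at an end of its diagonal of larger codegree: of the eight labellings of
a cycle, those starting at such an end give triples `(x, y, z)` at a root `v` with
`d(x, z) ≤ d(v, y)`, so there are at least `4q` rooted triples. Pigeonholing over the root and the
dyadic class `2 ^ j ≤ d(v, y) < 2 ^ (j + 1)` (at most `log n + 1` classes) gives the family `D`,
with `s = 2 ^ (j + 1)`; it is symmetric because reversing `x y z` keeps both diagonals. For a
fixed `x`, every middle vertex `y` extends `v x y` to at least `d(v, y) - 1 ≥ s / 4` four-cycles
through the edge `vx`, each with eight labellings, so the bound on four-cycles per edge limits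
the number of such `y`.
-/

open Finset Function

namespace ZMod

lemma forall_four {P : ZMod 4 → Prop} : (∀ i, P i) ↔ P 0 ∧ P 1 ∧ P 2 ∧ P 3 :=
  ⟨fun h => ⟨h 0, h 1, h 2, h 3⟩, fun ⟨h0, h1, h2, h3⟩ i => by fin_cases i <;> assumption⟩

def dihedral4 (k : ZMod 4) (b : Bool) (i : ZMod 4) : ZMod 4 := cond b (k + i) (k - i)

lemma dihedral4_adj : ∀ k b i, dihedral4 k b (i + 1) = dihedral4 k b i + 1 ∨
    dihedral4 k b i = dihedral4 k b (i + 1) + 1 := by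
  decide

lemma bijective_dihedral4 : ∀ k b, Bijective (dihedral4 k b) := by
  decide

lemma exists_dihedral4_eq_zero_one : ∀ k b, ∃ i, dihedral4 k b i = 0 ∧ dihedral4 k b (i + 1) = 1 ∨
    dihedral4 k b i = 1 ∧ dihedral4 k b (i + 1) = 0 := by
  decide

lemma dihedral4_inj_of_preimage : ∀ k b k' b',
    (∀ i, dihedral4 k b i = 0 ↔ dihedral4 k' b' i = 0) →
    (∀ i, dihedral4 k b i = 1 ↔ dihedral4 k' b' i = 1) → k = k' ∧ b = b' := by
  decide

lemma eq_of_eq_on_four {α : Type*} {c c' : ZMod 4 → α} (k : ZMod 4) (h0 : c k = c' k)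
    (h1 : c (k + 1) = c' (k + 1)) (h2 : c (k + 2) = c' (k + 2)) (h3 : c (k + 3) = c' (k + 3)) :
    c = c' := by
  have h : (fun i => c (k + i)) = fun i => c' (k + i) :=
    funext <| ZMod.forall_four.2 ⟨by simpa using h0, h1, h2, h3⟩
  exact (add_left_surjective k).injective_comp_right h

lemma eq_of_comp_dihedral4_eq {α : Type*} {c c' : ZMod 4 → α} (hc : Injective c)
    (hc' : Injective c') (h0 : c 0 = c' 0) (h1 : c 1 = c' 1) {k k' : ZMod 4} {b b' : Bool}
    (h : c ∘ dihedral4 k b = c' ∘ dihedral4 k' b') : c = c' ∧ k = k' ∧ b = b' := by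
  have hpre : ∀ m i, c m = c' m →
      (dihedral4 k b i = m ↔ dihedral4 k' b' i = m) := fun m i hm => by
    rw [← hc.eq_iff, ← hc'.eq_iff, ← hm]
    exact Eq.congr_left (congrFun h i)
  obtain ⟨rfl, rfl⟩ := dihedral4_inj_of_preimage k b k' b' (fun i => hpre 0 i h0)
    (fun i => hpre 1 i h1)
  exact ⟨(bijective_dihedral4 k b).2.injective_comp_right h, rfl, rfl⟩

end ZMod

lemma List.nodup_four {α : Type*} {a b c d : α} :
    [a, b, c, d].Nodup ↔ a ≠ b ∧ a ≠ c ∧ a ≠ d ∧ b ≠ c ∧ b ≠ d ∧ c ≠ d := by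
  simp only [List.nodup_cons, List.mem_cons, List.not_mem_nil, or_false, not_or, List.nodup_nil,
    not_false_eq_true, and_true, and_assoc, ne_eq]

namespace SimpleGraph

variable {V : Type*} (G : SimpleGraph V)

def IsFourCycle (a b c d : V) : Prop :=
  [a, b, c, d].Nodup ∧ G.Adj a b ∧ G.Adj b c ∧ G.Adj c d ∧ G.Adj d a

instance [DecidableEq V] [DecidableRel G.Adj] (a b c d : V) : Decidable (G.IsFourCycle a b c d) :=
  inferInstanceAs (Decidable (_ ∧ _))

noncomputable def codegree (u v : V) : ℕ := (G.commonNeighbors u v).ncard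

variable {G}

lemma IsFourCycle.reverse {a b c d : V} (h : G.IsFourCycle a b c d) : G.IsFourCycle a d c b := by
  obtain ⟨hnodup, hab, hbc, hcd, hda⟩ := h
  refine ⟨?_, hda.symm, hcd.symm, hbc.symm, hab.symm⟩
  rw [List.nodup_four] at hnodup ⊢
  tauto

lemma isFourCycle_iff {c : ZMod 4 → V} :
    G.IsFourCycle (c 0) (c 1) (c 2) (c 3) ↔ Injective c ∧ ∀ i, G.Adj (c i) (c (i + 1)) := by
  rw [ZMod.forall_four]
  exact and_congr (List.nodup_ofFn (f := c)) Iff.rfl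

lemma codegree_comm (u v : V) : G.codegree u v = G.codegree v u := by
  simp only [codegree, commonNeighbors_symm]

section Fintype

variable [Fintype V] [DecidableRel G.Adj]

lemma codegree_eq_card (u v : V) :
    G.codegree u v = #(univ.filter fun w => G.Adj u w ∧ G.Adj v w) := by
  rw [codegree, ← Set.ncard_coe_finset]
  congr 1
  ext w
  simp [commonNeighbors]

lemma codegree_le_card (u v : V) : G.codegree u v ≤ Fintype.card V :=
  (G.codegree_eq_card u v).trans_le (card_le_univ _)

variable [DecidableEq V] (G)

def labelledFourCycles : Finset (ZMod 4 → V) :=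
  univ.filter fun c => Injective c ∧ ∀ i, G.Adj (c i) (c (i + 1))

def labelledFourCyclesThrough (e : Sym2 V) : Finset (ZMod 4 → V) :=
  G.labelledFourCycles.filter fun c => ∃ i, s(c i, c (i + 1)) = e

noncomputable def rootedAt (v : V) : Finset (V × V × V) :=
  univ.filter fun t => G.IsFourCycle v t.1 t.2.1 t.2.2 ∧ G.codegree t.1 t.2.2 ≤ G.codegree v t.2.1

noncomputable def levelSet (v : V) (j : ℕ) : Finset (V × V × V) :=
  (G.rootedAt v).filter fun t => Nat.log 2 (G.codegree v t.2.1) = j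

def fourCyclesFrom (v x : V) : Finset (V × V) :=
  univ.filter fun p => G.IsFourCycle v x p.1 p.2

lemma c4Count_eq : Paper.c4Count G = #G.labelledFourCycles / 8 := by
  simp only [Paper.c4Count, Nat.card_eq_fintype_card, Fintype.card_subtype, labelledFourCycles]

lemma c4CountEdge_eq (e : Sym2 V) :
    Paper.c4CountEdge G e = #(G.labelledFourCyclesThrough e) / 8 := by
  simp only [Paper.c4CountEdge, Nat.card_eq_fintype_card, Fintype.card_subtype,
    labelledFourCyclesThrough, labelledFourCycles, filter_filter, and_assoc]

variable {G}

lemma mem_rootedAt {v x y z : V} :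
    (x, y, z) ∈ G.rootedAt v ↔ G.IsFourCycle v x y z ∧ G.codegree x z ≤ G.codegree v y := by
  simp [rootedAt]

lemma mem_levelSet {v x y z : V} {j : ℕ} :
    (x, y, z) ∈ G.levelSet v j ↔ (x, y, z) ∈ G.rootedAt v ∧ Nat.log 2 (G.codegree v y) = j :=
  mem_filter

lemma comp_add_left_mem_labelledFourCycles {c : ZMod 4 → V} (hc : c ∈ G.labelledFourCycles)
    (k : ZMod 4) : (fun i => c (k + i)) ∈ G.labelledFourCycles := by
  simp only [labelledFourCycles, mem_filter, mem_univ, true_and] at hc ⊢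
  exact ⟨hc.1.comp (add_right_injective k), fun i => by simpa only [add_assoc] using hc.2 (k + i)⟩

lemma isFourCycle_of_mem_labelledFourCycles {c : ZMod 4 → V} (hc : c ∈ G.labelledFourCycles)
    (k : ZMod 4) : G.IsFourCycle (c k) (c (k + 1)) (c (k + 2)) (c (k + 3)) := by
  have h := isFourCycle_iff.2 (mem_filter.1 (comp_add_left_mem_labelledFourCycles hc k)).2
  rwa [add_zero] at h

lemma card_labelledFourCycles_rooted_le (k : ZMod 4) :
    #(G.labelledFourCycles.filter fun c =>
      G.codegree (c (k + 1)) (c (k + 3)) ≤ G.codegree (c k) (c (k + 2))) ≤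
      ∑ v, #(G.rootedAt v) := by
  rw [card_eq_sum_card_fiberwise (f := fun c => c k) (t := univ) fun _ _ => mem_coe.2 (mem_univ _)]
  refine sum_le_sum fun v _ => card_le_card_of_injOn (fun c => (c (k + 1), c (k + 2), c (k + 3)))
    ?_ ?_
  · intro c hc
    rw [mem_coe, mem_filter, mem_filter] at hc
    obtain ⟨⟨hc, hcod⟩, rfl⟩ := hc
    exact mem_rootedAt.2 ⟨isFourCycle_of_mem_labelledFourCycles hc k, hcod⟩
  · intro c hc c' hc' h
    simp only [mem_coe, mem_filter, Prod.mk.injEq] at hc hc' h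
    exact ZMod.eq_of_eq_on_four k (hc.2.trans hc'.2.symm) h.1 h.2.1 h.2.2

lemma card_labelledFourCycles_le : #G.labelledFourCycles ≤ 2 * ∑ v, #(G.rootedAt v) := by
  -- the indices are written as `k + i` to match `card_labelledFourCycles_rooted_le` at `k = 0, 1`
  have hcover : G.labelledFourCycles ⊆
      (G.labelledFourCycles.filter fun c =>
        G.codegree (c (0 + 1)) (c (0 + 3)) ≤ G.codegree (c 0) (c (0 + 2))) ∪
      (G.labelledFourCycles.filter fun c =>
        G.codegree (c (1 + 1)) (c (1 + 3)) ≤ G.codegree (c 1) (c (1 + 2))) := by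
    intro c hc
    have h : G.codegree (c 1) (c 3) ≤ G.codegree (c 0) (c 2) ∨
        G.codegree (c 2) (c 0) ≤ G.codegree (c 1) (c 3) := by
      rw [codegree_comm (c 2)]
      exact le_total _ _
    rcases h with h | h
    · exact mem_union_left _ (mem_filter.2 ⟨hc, h⟩)
    · exact mem_union_right _ (mem_filter.2 ⟨hc, h⟩)
  calc #G.labelledFourCycles ≤ _ := card_le_card hcover
    _ ≤ _ := card_union_le _ _
    _ ≤ _ := add_le_add (card_labelledFourCycles_rooted_le 0) (card_labelledFourCycles_rooted_le 1)
    _ = _ := (two_mul _).symm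

lemma swap_mem_levelSet {v x y z : V} {j : ℕ} (h : (x, y, z) ∈ G.levelSet v j) :
    (z, y, x) ∈ G.levelSet v j := by
  obtain ⟨hroot, hlevel⟩ := mem_levelSet.1 h
  obtain ⟨hcyc, hcod⟩ := mem_rootedAt.1 hroot
  exact mem_levelSet.2 ⟨mem_rootedAt.2 ⟨hcyc.reverse, codegree_comm x z ▸ hcod⟩, hlevel⟩

lemma card_rootedAt_eq_sum_levelSet (v : V) :
    #(G.rootedAt v) = ∑ j ∈ range (Nat.log 2 (Fintype.card V) + 1), #(G.levelSet v j) :=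
  card_eq_sum_card_fiberwise fun _ _ =>
    mem_range.2 (Nat.lt_succ_of_le (Nat.log_mono_right (codegree_le_card _ _)))

variable (G) in
lemma exists_c4Count_le_card_levelSet [Nonempty V] : ∃ v j,
    4 * Paper.c4Count G ≤
      Fintype.card V * (Nat.log 2 (Fintype.card V) + 1) * #(G.levelSet v j) := by
  set J := Nat.log 2 (Fintype.card V) + 1
  obtain ⟨⟨v, j⟩, -, hmax⟩ := (univ ×ˢ range J).exists_max_image
    (fun p => #(G.levelSet p.1 p.2)) (univ_nonempty.product (nonempty_range_iff.2 (by simp [J])))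
  refine ⟨v, j, ?_⟩
  have h8 : 8 * Paper.c4Count G ≤ #G.labelledFourCycles := by
    rw [c4Count_eq]
    exact Nat.mul_div_le _ 8
  have hsum : ∑ v, #(G.rootedAt v) ≤ Fintype.card V * J * #(G.levelSet v j) := by
    simp_rw [card_rootedAt_eq_sum_levelSet, ← sum_product']
    refine (sum_le_card_nsmul _ _ _ hmax).trans_eq ?_
    rw [card_product, card_univ, card_range, smul_eq_mul]
  have := card_labelledFourCycles_le (G := G)
  omega

lemma two_le_codegree {v x y z : V} (h : (x, y, z) ∈ G.rootedAt v) : 2 ≤ G.codegree v y := by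
  obtain ⟨⟨hnodup, hvx, hxy, hyz, hzv⟩, -⟩ := mem_rootedAt.1 h
  rw [codegree_eq_card]
  refine one_lt_card.2 ⟨x, ?_, z, ?_, (List.nodup_four.1 hnodup).2.2.2.2.1⟩
  · simpa using ⟨hvx, hxy.symm⟩
  · simpa using ⟨hzv.symm, hyz⟩

lemma codegree_sub_one_le_card_fourCyclesFrom {v x y z : V} (h : (x, y, z) ∈ G.rootedAt v) :
    G.codegree v y - 1 ≤ #((G.fourCyclesFrom v x).filter fun p => p.1 = y) := by
  obtain ⟨⟨hnodup, hvx, hxy, -, -⟩, -⟩ := mem_rootedAt.1 h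
  obtain ⟨hvx', hvy, -, hxy', -, -⟩ := List.nodup_four.1 hnodup
  rw [codegree_eq_card]
  refine (pred_card_le_card_erase (a := x)).trans (card_le_card_of_injOn (fun w => (y, w)) ?_ ?_)
  · intro w hw
    simp only [coe_erase, coe_filter, mem_univ, true_and, Set.mem_sdiff, Set.mem_ofPred_eq,
      Set.mem_singleton_iff] at hw
    obtain ⟨⟨hvw, hyw⟩, hwx⟩ := hw
    simp only [fourCyclesFrom, coe_filter, mem_filter, mem_univ, true_and, Set.mem_ofPred_eq,
      and_true]
    exact ⟨List.nodup_four.2 ⟨hvx', hvy, hvw.ne, hxy', Ne.symm hwx, hyw.ne⟩, hvx, hxy, hyw,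
      hvw.symm⟩
  · exact fun _ _ _ _ h => (Prod.mk.inj h).2

lemma comp_dihedral4_mem {c : ZMod 4 → V} (hc : c ∈ G.labelledFourCycles) (k : ZMod 4) (b : Bool) :
    c ∘ ZMod.dihedral4 k b ∈ G.labelledFourCyclesThrough s(c 0, c 1) := by
  simp only [labelledFourCyclesThrough, labelledFourCycles, mem_filter, mem_univ, true_and] at hc ⊢
  refine ⟨⟨hc.1.comp (ZMod.bijective_dihedral4 k b).1, fun i => ?_⟩, ?_⟩
  · rcases ZMod.dihedral4_adj k b i with h | h
    · simpa only [comp_apply, h] using hc.2 _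
    · simpa only [comp_apply, h] using (hc.2 _).symm
  · obtain ⟨i, ⟨h0, h1⟩ | ⟨h1, h0⟩⟩ := ZMod.exists_dihedral4_eq_zero_one k b
    · exact ⟨i, by simp only [comp_apply, h0, h1]⟩
    · exact ⟨i, by simp only [comp_apply, h0, h1, Sym2.eq_swap]⟩

lemma card_fourCyclesFrom_le (v x : V) :
    #(G.fourCyclesFrom v x) ≤ Paper.c4CountEdge G s(v, x) := by
  rw [c4CountEdge_eq, Nat.le_div_iff_mul_le (by norm_num)]
  -- `ZMod 4` is definitionally `Fin 4`, so `![v, x, y, w]` is a labelling of the cycle `v x y w`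
  have hcyc : ∀ p ∈ G.fourCyclesFrom v x, Injective ![v, x, p.1, p.2] ∧
      ∀ i, G.Adj (![v, x, p.1, p.2] i) (![v, x, p.1, p.2] (i + 1)) := fun p hp =>
    isFourCycle_iff.1 (mem_filter.1 hp).2
  calc #(G.fourCyclesFrom v x) * 8
      = #(G.fourCyclesFrom v x ×ˢ (univ : Finset (ZMod 4 × Bool))) := by rw [card_product]; rfl
    _ ≤ _ := card_le_card_of_injOn (fun q => ![v, x, q.1.1, q.1.2] ∘ ZMod.dihedral4 q.2.1 q.2.2)
        (fun q hq => comp_dihedral4_mem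
          (mem_filter.2 ⟨mem_univ _, hcyc q.1 (mem_product.1 hq).1⟩) _ _)
        (fun q hq q' hq' h => by
          obtain ⟨hceq, hk, hb⟩ := ZMod.eq_of_comp_dihedral4_eq (hcyc _ (mem_product.1 hq).1).1
            (hcyc _ (mem_product.1 hq').1).1 rfl rfl h
          exact Prod.ext (Prod.ext (congrFun hceq 2) (congrFun hceq 3)) (Prod.ext hk hb))

lemma card_middle_mul_le (v x : V) (j : ℕ) :
    ({y | ∃ z, (x, y, z) ∈ G.levelSet v j} : Set V).ncard * 2 ^ (j + 1) ≤
      4 * Paper.c4CountEdge G s(v, x) := by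
  set Y := univ.filter fun y => ∃ z, (x, y, z) ∈ G.levelSet v j
  have hY : ({y | ∃ z, (x, y, z) ∈ G.levelSet v j} : Set V) = Y := by
    ext y
    simp [Y]
  have hfiber : ∀ y ∈ Y, 2 ^ (j + 1) ≤ 4 * #((G.fourCyclesFrom v x).filter fun p => p.1 = y) := by
    intro y hy
    obtain ⟨z, hz⟩ := (mem_filter.1 hy).2
    obtain ⟨hroot, hlevel⟩ := mem_levelSet.1 hz
    have h2 := two_le_codegree hroot
    have hpow : 2 ^ j ≤ G.codegree v y := by
      rw [← hlevel]
      exact Nat.pow_log_le_self 2 (by omega)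
    have := codegree_sub_one_le_card_fourCyclesFrom hroot
    rw [pow_succ]
    omega
  rw [hY, Set.ncard_coe_finset]
  calc #Y * 2 ^ (j + 1) = ∑ _y ∈ Y, 2 ^ (j + 1) := by rw [sum_const, smul_eq_mul]
    _ ≤ ∑ y ∈ Y, 4 * #((G.fourCyclesFrom v x).filter fun p => p.1 = y) := sum_le_sum hfiber
    _ ≤ ∑ y, 4 * #((G.fourCyclesFrom v x).filter fun p => p.1 = y) :=
        sum_le_sum_of_subset (subset_univ _)
    _ = 4 * #(G.fourCyclesFrom v x) := by
        rw [← mul_sum, card_eq_sum_card_fiberwise (f := Prod.fst) (t := univ)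
          fun _ _ => mem_coe.2 (mem_univ _)]
    _ ≤ 4 * Paper.c4CountEdge G s(v, x) := Nat.mul_le_mul_left 4 (card_fourCyclesFrom_le v x)

lemma codegree_le_of_mem_levelSet {v x y z : V} {j : ℕ} (h : (x, y, z) ∈ G.levelSet v j) :
    G.codegree v y ≤ 2 ^ (j + 1) ∧ G.codegree x z ≤ 2 ^ (j + 1) := by
  obtain ⟨hroot, hlevel⟩ := mem_levelSet.1 h
  have hlt : G.codegree v y < 2 ^ (j + 1) := hlevel ▸ Nat.lt_pow_succ_log_self one_lt_two _
  exact ⟨hlt.le, (mem_rootedAt.1 hroot).2.trans hlt.le⟩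

variable (G) in
lemma exists_card_levelSet_ge (hV : 2 ≤ Fintype.card V) : ∃ v j,
    (Paper.c4Count G : ℝ) / (Fintype.card V * Real.logb 2 (Fintype.card V)) ≤
      #(G.levelSet v j) := by
  have : Nonempty V := Fintype.card_pos_iff.1 (by omega)
  obtain ⟨v, j, hvj⟩ := G.exists_c4Count_le_card_levelSet
  refine ⟨v, j, ?_⟩
  set N := Fintype.card V
  have hlog : 1 ≤ Real.logb 2 N := by
    rw [Real.le_logb_iff_rpow_le one_lt_two (by positivity), Real.rpow_one]
    exact_mod_cast hV
  have hJ : ((Nat.log 2 N + 1 : ℕ) : ℝ) ≤ 2 * Real.logb 2 N := by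
    have := Real.natLog_le_logb N 2
    push_cast at this ⊢
    linarith
  have h4 : (4 * Paper.c4Count G : ℝ) ≤ N * (Nat.log 2 N + 1 : ℕ) * #(G.levelSet v j) := by
    exact_mod_cast hvj
  rw [div_le_iff₀ (by positivity)]
  nlinarith [mul_le_mul_of_nonneg_left hJ (by positivity : (0 : ℝ) ≤ N * #(G.levelSet v j))]

lemma ncard_middle_le {B : ℝ} (hB : 0 ≤ B)
    (hedge : ∀ e ∈ G.edgeSet, (Paper.c4CountEdge G e : ℝ) ≤ B) (v x : V) (j : ℕ) :
    (({y | ∃ z, (x, y, z) ∈ G.levelSet v j} : Set V).ncard : ℝ) ≤ 4 * B / 2 ^ (j + 1) := by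
  rcases Set.eq_empty_or_nonempty {y | ∃ z, (x, y, z) ∈ G.levelSet v j} with h | ⟨y, z, h⟩
  · rw [h, Set.ncard_empty, Nat.cast_zero]
    positivity
  have hvx : G.Adj v x := (mem_rootedAt.1 (mem_levelSet.1 h).1).1.2.1
  rw [le_div_iff₀ (by positivity)]
  calc _ ≤ 4 * (Paper.c4CountEdge G s(v, x) : ℝ) := by exact_mod_cast card_middle_mul_le v x j
    _ ≤ 4 * B := by linarith [hedge s(v, x) hvx]

end Fintype

end SimpleGraph


theorem statement_15_general (ε K : ℝ) :
    ∃ n₀ : ℕ, ∀ n : ℕ, n₀ ≤ n → ∀ G : SimpleGraph (Fin n), ∀ q : ℕ,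
      (∀ v, ((G.neighborSet v).ncard : ℝ) ≤ K * (n : ℝ) ^ ((1 : ℝ) / 3 + ε)) →
      Paper.c4Count G = q →
      (∀ e ∈ G.edgeSet, (Paper.c4CountEdge G e : ℝ) ≤
        96 * Real.logb 2 n / (n : ℝ) ^ ((4 : ℝ) / 3 + ε) * (q : ℝ)) →
      ∃ (v : Fin n) (s : ℝ) (D : Set (Fin n × Fin n × Fin n)), 0 < s ∧
        (∀ x y z, (x, y, z) ∈ D → (z, y, x) ∈ D) ∧
        (q : ℝ) / ((n : ℝ) * Real.logb 2 n) ≤ (D.ncard : ℝ) ∧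
        (∀ x y z, (x, y, z) ∈ D → (List.Pairwise (· ≠ ·) [v, x, y, z] ∧
          G.Adj v x ∧ G.Adj x y ∧ G.Adj y z ∧ G.Adj z v)) ∧
        (∀ x y z, (x, y, z) ∈ D →
          ((G.neighborSet v ∩ G.neighborSet y).ncard : ℝ) ≤ s ∧
          ((G.neighborSet x ∩ G.neighborSet z).ncard : ℝ) ≤ s) ∧
        (∀ x : Fin n, (({y | ∃ z, (x, y, z) ∈ D}).ncard : ℝ) ≤
          384 * Real.logb 2 n * (q : ℝ) / ((n : ℝ) ^ ((4 : ℝ) / 3 + ε) * s)) := by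
  classical
  refine ⟨2, fun n hn G q _ hq hedge => ?_⟩
  have hL : 0 ≤ Real.logb 2 n := Real.logb_nonneg one_lt_two (by norm_cast; omega)
  obtain ⟨v, j, hvj⟩ := G.exists_card_levelSet_ge (by simpa using hn)
  rw [Fintype.card_fin, hq] at hvj
  refine ⟨v, 2 ^ (j + 1), G.levelSet v j, by positivity,
    fun x y z h => SimpleGraph.swap_mem_levelSet h, by rwa [Set.ncard_coe_finset],
    fun x y z h => (SimpleGraph.mem_rootedAt.1 (SimpleGraph.mem_levelSet.1 h).1).1,
    fun x y z h => ?_, fun x => ?_⟩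
  · obtain ⟨hvy, hxz⟩ := SimpleGraph.codegree_le_of_mem_levelSet h
    exact ⟨by exact_mod_cast hvy, by exact_mod_cast hxz⟩
  · simp only [Finset.mem_coe]
    refine (G.ncard_middle_le (by positivity) hedge v x j).trans_eq ?_
    field_simp
    ring

/-- Lemma 2.15: finding a vertex `v` and a large symmetric family of triples
extending `v` to `4`-cycles. -/
theorem statement_15 (ε K : ℝ) (hε0 : 0 < ε) (hε1 : ε < 1 / 6) (hK : 0 < K) :
    ∃ n₀ : ℕ, ∀ n : ℕ, n₀ ≤ n → ∀ G : SimpleGraph (Fin n), ∀ q : ℕ,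
      (∀ v, ((G.neighborSet v).ncard : ℝ) ≤ K * (n : ℝ) ^ ((1 : ℝ) / 3 + ε)) →
      Paper.c4Count G = q →
      (∀ e ∈ G.edgeSet, (Paper.c4CountEdge G e : ℝ) ≤
        96 * Real.logb 2 n / (n : ℝ) ^ ((4 : ℝ) / 3 + ε) * (q : ℝ)) →
      ∃ (v : Fin n) (s : ℝ) (D : Set (Fin n × Fin n × Fin n)), 0 < s ∧
        (∀ x y z, (x, y, z) ∈ D → (z, y, x) ∈ D) ∧
        (q : ℝ) / ((n : ℝ) * Real.logb 2 n) ≤ (D.ncard : ℝ) ∧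
        (∀ x y z, (x, y, z) ∈ D → (List.Pairwise (· ≠ ·) [v, x, y, z] ∧
          G.Adj v x ∧ G.Adj x y ∧ G.Adj y z ∧ G.Adj z v)) ∧
        (∀ x y z, (x, y, z) ∈ D →
          ((G.neighborSet v ∩ G.neighborSet y).ncard : ℝ) ≤ s ∧
          ((G.neighborSet x ∩ G.neighborSet z).ncard : ℝ) ≤ s) ∧
        (∀ x : Fin n, (({y | ∃ z, (x, y, z) ∈ D}).ncard : ℝ) ≤
          384 * Real.logb 2 n * (q : ℝ) / ((n : ℝ) ^ ((4 : ℝ) / 3 + ε) * s)) :=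
  statement_15_general ε K
end

section
/- Let r ≥ 2 be an integer and let H be a graph with minimum degree at least r. Then there exist δ > 0, c > 0 and an integer n₀ such that for all n ≥ n₀, the Turán number satisfies ex(n, H) ≥ c·n^{2 − 2/r + δ}. -/
open Real

/-! Deletion method. In the random graph `G(n, p)` with `p = n^(-q)`, `q = 2/r - δ`, there are
about `p n²/2` edges and at most `n^v p^e` labelled copies of `H` in expectation (`v`, `e` the
numbers of vertices and edges of `H`). Deleting one edge from each copy leaves an `H`-free graph.
As every vertex of `H` has degree at least `r`, we have `r v ≤ 2 e`, so for `δ = 1/(2e)` the copies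
number at most `n^(v - q e) ≤ n^(1/2)`, which is negligible against `n^(2 - q)`. Expectations are
computed by counting over all labellings `Sym2 (Fin n) → Fin m` with `m = ⌈n^q⌉`. -/

namespace Paper

open Finset Fintype SimpleGraph

theorem card_filter_forall_eq_mul_pow {α β : Type*} [Fintype α] [DecidableEq α] [Fintype β]
    [DecidableEq β] (A : Finset α) (b : β) :
    #{ω : α → β | ∀ x ∈ A, ω x = b} * card β ^ #A = card β ^ card α := by
  have : ({ω : α → β | ∀ x ∈ A, ω x = b} : Finset _) =
      piFinset fun x => if x ∈ A then {b} else univ := by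
    ext ω
    simp only [mem_filter, mem_univ, true_and, mem_piFinset]
    refine forall_congr' fun x => ?_
    split_ifs with hx <;> simp [hx]
  rw [this, card_piFinset]
  simp only [apply_ite card, card_singleton, card_univ]
  rw [prod_ite, prod_const_one, one_mul, prod_const, ← pow_add, filter_notMem_eq_sdiff,
    card_sdiff_add_card_eq_card (subset_univ A), card_univ]

section SampleGraph

variable {V : Type*} {m : ℕ} [NeZero m]

/-- For `ω` uniform on `Sym2 V → Fin m`, this is the binomial random graph `G(|V|, 1/m)`. -/
def sampleGraph (ω : Sym2 V → Fin m) : SimpleGraph V := fromEdgeSet {e | ω e = 0}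

instance [DecidableEq V] (ω : Sym2 V → Fin m) : DecidableRel (sampleGraph ω).Adj := by
  unfold sampleGraph; infer_instance

theorem edgeFinset_sampleGraph [Fintype V] [DecidableEq V] (ω : Sym2 V → Fin m) :
    (sampleGraph ω).edgeFinset = {e ∈ ({e | ¬ e.IsDiag} : Finset (Sym2 V)) | ω e = 0} := by
  ext e
  rw [mem_edgeFinset]
  simp [sampleGraph, and_comm]

theorem sum_card_edgeFinset_sampleGraph_mul [Fintype V] [DecidableEq V] :
    (∑ ω : Sym2 V → Fin m, #(sampleGraph ω).edgeFinset) * m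
      = (card V).choose 2 * m ^ card (Sym2 V) := by
  have hω (e : Sym2 V) : #{ω : Sym2 V → Fin m | ω e = 0} * m = m ^ card (Sym2 V) := by
    simpa using card_filter_forall_eq_mul_pow {e} (0 : Fin m)
  have hswap : ∑ ω : Sym2 V → Fin m, #{e ∈ ({e | ¬ e.IsDiag} : Finset (Sym2 V)) | ω e = 0}
      = ∑ e ∈ ({e | ¬ e.IsDiag} : Finset (Sym2 V)), #{ω : Sym2 V → Fin m | ω e = 0} :=
    sum_card_bipartiteAbove_eq_sum_card_bipartiteBelow _
  simp_rw [edgeFinset_sampleGraph, hswap, sum_mul, hω, sum_const, smul_eq_mul]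
  rw [← Sym2.card_subtype_not_diag, Fintype.card_subtype]

variable {W : Type*} (H : SimpleGraph W) [Fintype W] [DecidableRel H.Adj]

def copySampleGraphEquiv (ω : Sym2 V → Fin m) :
    Copy H (sampleGraph ω) ≃ {f : W ↪ V // ∀ e ∈ H.edgeFinset, ω (f.sym2Map e) = 0} where
  toFun c := ⟨c.toEmbedding, fun e he => by
    induction e using Sym2.ind with
    | _ a b => exact (c.toHom.map_adj (mem_edgeFinset.1 he)).1⟩
  invFun f := ⟨⟨f, fun {a b} h => ⟨f.2 s(a, b) (mem_edgeFinset.2 h), f.1.injective.ne h.ne⟩⟩,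
    f.1.injective⟩
  left_inv _ := rfl
  right_inv _ := rfl

theorem labelledCopyCount_sampleGraph [Fintype V] [DecidableEq W] (ω : Sym2 V → Fin m) :
    (sampleGraph ω).labelledCopyCount H
      = #{f : W ↪ V | ∀ e ∈ H.edgeFinset, ω (f.sym2Map e) = 0} := by
  rw [labelledCopyCount, ← Fintype.card_subtype]
  convert Fintype.card_congr (copySampleGraphEquiv H ω)

theorem sum_labelledCopyCount_sampleGraph_mul_le [Fintype V] [DecidableEq V] [DecidableEq W] :
    (∑ ω : Sym2 V → Fin m, (sampleGraph ω).labelledCopyCount H) * m ^ #H.edgeFinset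
      ≤ card V ^ card W * m ^ card (Sym2 V) := by
  have hf (f : W ↪ V) :
      #{ω : Sym2 V → Fin m | ∀ e ∈ H.edgeFinset, ω (f.sym2Map e) = 0} * m ^ #H.edgeFinset
        = m ^ card (Sym2 V) := by
    simpa using card_filter_forall_eq_mul_pow (H.edgeFinset.map f.sym2Map) (0 : Fin m)
  have hswap : ∑ ω : Sym2 V → Fin m, #{f : W ↪ V | ∀ e ∈ H.edgeFinset, ω (f.sym2Map e) = 0}
      = ∑ f : W ↪ V, #{ω : Sym2 V → Fin m | ∀ e ∈ H.edgeFinset, ω (f.sym2Map e) = 0} :=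
    sum_card_bipartiteAbove_eq_sum_card_bipartiteBelow _
  simp_rw [labelledCopyCount_sampleGraph, hswap, sum_mul, hf, sum_const, smul_eq_mul, card_univ]
  gcongr
  calc card (W ↪ V) ≤ card (W → V) := card_le_of_injective _ DFunLike.coe_injective
    _ = card V ^ card W := card_fun

end SampleGraph

theorem containsCopy_iff_isContained {α β : Type*} {G : SimpleGraph α} {H : SimpleGraph β} :
    ContainsCopy G H ↔ H ⊑ G :=
  ⟨fun ⟨f, hf⟩ => ⟨⟨f, hf⟩⟩, fun ⟨c⟩ => ⟨c.toHom, c.injective⟩⟩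

theorem card_edgeFinset_le_exNumber {n : ℕ} {W : Type*} {H : SimpleGraph W}
    (G : SimpleGraph (Fin n)) [Fintype G.edgeSet] (hG : H.Free G) :
    #G.edgeFinset ≤ exNumber n H := by
  refine le_csSup ⟨Nat.card (Sym2 (Fin n)), ?_⟩ ⟨G, mt containsCopy_iff_isContained.1 hG, ?_⟩
  · rintro _ ⟨G, -, rfl⟩
    exact Set.ncard_le_card _
  · rw [Set.ncard_eq_toFinset_card', edgeFinset]

theorem choose_two_div_sub_pow_div_le_exNumber {W : Type*} [Fintype W] (H : SimpleGraph W)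
    [DecidableRel H.Adj] (hH : H ≠ ⊥) (n : ℕ) {m : ℕ} (hm : 0 < m) :
    (n.choose 2 : ℝ) / m - (n : ℝ) ^ card W / (m : ℝ) ^ #H.edgeFinset ≤ exNumber n H := by
  classical
  have : NeZero m := ⟨hm.ne'⟩
  have hkill (ω : Sym2 (Fin n) → Fin m) : #(sampleGraph ω).edgeFinset
      ≤ exNumber n H + (sampleGraph ω).labelledCopyCount H :=
    le_card_edgeFinset_killCopies_add_copyCount.trans <| add_le_add
      (card_edgeFinset_le_exNumber _ (free_killCopies hH)) copyCount_le_labelledCopyCount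
  have hsum := sum_le_sum fun ω (_ : ω ∈ univ) => hkill ω
  rw [sum_add_distrib, sum_const, card_univ, card_fun, Fintype.card_fin, smul_eq_mul] at hsum
  have hedges := sum_card_edgeFinset_sampleGraph_mul (V := Fin n) (m := m)
  have hcopies := sum_labelledCopyCount_sampleGraph_mul_le (V := Fin n) (m := m) H
  rw [Fintype.card_fin] at hedges hcopies
  set N := m ^ card (Sym2 (Fin n))
  set E := ∑ ω : Sym2 (Fin n) → Fin m, #(sampleGraph ω).edgeFinset
  set C := ∑ ω : Sym2 (Fin n) → Fin m, (sampleGraph ω).labelledCopyCount H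
  have hN : (0 : ℝ) < N := by positivity
  have hE : (N : ℝ) * (n.choose 2 / m) = E := by
    rw [mul_div_assoc', div_eq_iff (by positivity), mul_comm]
    exact_mod_cast hedges.symm
  have hC : (C : ℝ) ≤ N * ((n : ℝ) ^ card W / (m : ℝ) ^ #H.edgeFinset) := by
    rw [mul_div_assoc', le_div_iff₀ (by positivity)]
    exact_mod_cast hcopies.trans_eq (mul_comm _ _)
  rw [sub_le_iff_le_add, ← mul_le_mul_iff_right₀ hN, hE, mul_add]
  exact (Nat.cast_le.2 hsum).trans (by push_cast; linarith)

theorem ncard_neighborSet_eq_degree {V : Type*} (G : SimpleGraph V) (v : V)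
    [Fintype (G.neighborSet v)] : (G.neighborSet v).ncard = G.degree v := by
  rw [Set.ncard_eq_toFinset_card', Set.toFinset_card, card_neighborSet_eq_degree]

theorem mul_card_le_two_mul_card_edgeFinset {V : Type*} [Fintype V] {G : SimpleGraph V}
    [DecidableRel G.Adj] {r : ℕ} (h : ∀ v, r ≤ G.degree v) :
    r * card V ≤ 2 * #G.edgeFinset := by
  rw [← sum_degrees_eq_twice_card_edges, mul_comm, ← card_univ, ← smul_eq_mul]
  exact card_nsmul_le_sum _ _ _ fun v _ => h v

section Asymptotics

open Real

theorem rpow_two_sub_div_eight_le_choose_two_div_ceil {n : ℕ} (hn : 2 ≤ n) {q : ℝ}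
    (hq : 0 ≤ q) : (n : ℝ) ^ (2 - q) / 8 ≤ (n.choose 2 : ℝ) / ⌈(n : ℝ) ^ q⌉₊ := by
  have hn' : (2 : ℝ) ≤ n := by exact_mod_cast hn
  have hx : 1 ≤ (n : ℝ) ^ q := one_le_rpow (by linarith) hq
  have hchoose : (n : ℝ) ^ 2 / 4 ≤ n.choose 2 := by
    rw [Nat.cast_choose_two]
    nlinarith
  calc (n : ℝ) ^ (2 - q) / 8 = (n : ℝ) ^ 2 / 4 / (2 * (n : ℝ) ^ q) := by
        rw [rpow_sub (by linarith), rpow_two]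
        ring
    _ ≤ (n.choose 2 : ℝ) / ⌈(n : ℝ) ^ q⌉₊ :=
        div_le_div₀ (by positivity) hchoose (by positivity) (Nat.ceil_le_two_mul (by linarith))

theorem pow_div_ceil_rpow_pow_le {n : ℕ} (hn : 0 < n) (q : ℝ) (v e : ℕ) :
    (n : ℝ) ^ v / (⌈(n : ℝ) ^ q⌉₊ : ℝ) ^ e ≤ (n : ℝ) ^ ((v : ℝ) - q * e) := by
  have hn' : (0 : ℝ) < n := by exact_mod_cast hn
  rw [rpow_sub hn', rpow_natCast, rpow_mul hn'.le, rpow_natCast]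
  gcongr
  exact Nat.le_ceil _

theorem rpow_two_sub_div_sixteen_le {n : ℕ} (hn : 256 ≤ n) {q : ℝ} (hq0 : 0 ≤ q) (hq1 : q ≤ 1)
    {v e : ℕ} (hve : (v : ℝ) ≤ q * e + 1 / 2) :
    (n : ℝ) ^ (2 - q) / 16
      ≤ (n.choose 2 : ℝ) / ⌈(n : ℝ) ^ q⌉₊ - (n : ℝ) ^ v / (⌈(n : ℝ) ^ q⌉₊ : ℝ) ^ e := by
  have hn' : (256 : ℝ) ≤ n := by exact_mod_cast hn
  have hsqrt : 16 ≤ √(n : ℝ) := (le_sqrt (by norm_num) (by linarith)).2 (by linarith)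
  have hcopies : (n : ℝ) ^ v / (⌈(n : ℝ) ^ q⌉₊ : ℝ) ^ e ≤ (n : ℝ) ^ (2 - q) / 16 :=
    calc (n : ℝ) ^ v / (⌈(n : ℝ) ^ q⌉₊ : ℝ) ^ e ≤ (n : ℝ) ^ ((v : ℝ) - q * e) :=
          pow_div_ceil_rpow_pow_le (by omega) q v e
      _ ≤ (n : ℝ) ^ (1 / (2 : ℝ)) := rpow_le_rpow_of_exponent_le (by linarith) (by linarith)
      _ = √(n : ℝ) := (sqrt_eq_rpow _).symm
      _ ≤ (n : ℝ) / 16 := by nlinarith [mul_self_sqrt (show (0 : ℝ) ≤ n by linarith)]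
      _ = (n : ℝ) ^ (1 : ℝ) / 16 := by rw [rpow_one]
      _ ≤ (n : ℝ) ^ (2 - q) / 16 := by
          gcongr
          · linarith
          · linarith
  linarith [rpow_two_sub_div_eight_le_choose_two_div_ceil (by omega : 2 ≤ n) hq0]

end Asymptotics

noncomputable def deletionExponent (r e : ℕ) : ℝ := 2 / r - 1 / (2 * e)

theorem deletionExponent_nonneg {r e : ℕ} (hr : 0 < r) (hre : r ≤ 2 * e) :
    0 ≤ deletionExponent r e := by
  have hr' : (0 : ℝ) < r := by exact_mod_cast hr
  have hre' : (r : ℝ) ≤ 2 * e := by exact_mod_cast hre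
  rw [deletionExponent, sub_nonneg, div_le_div_iff₀ (by linarith) hr']
  linarith

theorem deletionExponent_le_one {r : ℕ} (hr : 2 ≤ r) (e : ℕ) : deletionExponent r e ≤ 1 := by
  have hr' : (2 : ℝ) ≤ r := by exact_mod_cast hr
  have : 2 / (r : ℝ) ≤ 1 := (div_le_one (by positivity)).2 hr'
  have : 0 ≤ 1 / (2 * (e : ℝ)) := by positivity
  rw [deletionExponent]
  linarith

theorem le_deletionExponent_mul_add_half {r v e : ℕ} (hr : 0 < r) (he : 0 < e)
    (hrv : r * v ≤ 2 * e) : (v : ℝ) ≤ deletionExponent r e * e + 1 / 2 := by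
  have hrv' : (r : ℝ) * v ≤ 2 * e := by exact_mod_cast hrv
  have : deletionExponent r e * e + 1 / 2 = 2 * e / r := by
    rw [deletionExponent]
    field_simp
    ring
  rw [this, le_div_iff₀ (by positivity)]
  linarith

end Paper

/-- the probabilistic deletion lower bound `ex(n, H) = Ω(n^{2 - 2/r + δ})` for
graphs `H` of minimum degree at least `r`. -/
theorem statement_18 {W : Type*} [Fintype W] [Nonempty W] (r : ℕ) (hr : 2 ≤ r)
    (H : SimpleGraph W) (hmin : ∀ v, r ≤ (H.neighborSet v).ncard) :
    ∃ δ : ℝ, 0 < δ ∧ ∃ c : ℝ, 0 < c ∧ ∃ n₀ : ℕ, ∀ n : ℕ, n₀ ≤ n →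
      c * (n : ℝ) ^ (2 - 2 / (r : ℝ) + δ) ≤ (Paper.exNumber n H : ℝ) := by
  classical
  set v := Fintype.card W
  set e := H.edgeFinset.card
  have hdeg (w : W) : r ≤ H.degree w := (hmin w).trans_eq (Paper.ncard_neighborSet_eq_degree H w)
  obtain ⟨w⟩ := ‹Nonempty W›
  have hH : H ≠ ⊥ := SimpleGraph.ne_bot_iff_exists_adj.2
    ⟨w, (H.degree_pos_iff_exists_adj w).1 (by linarith [hdeg w])⟩
  have he : 0 < e := Finset.card_pos.2 (SimpleGraph.edgeFinset_nonempty.2 hH)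
  have hrv : r * v ≤ 2 * e := Paper.mul_card_le_two_mul_card_edgeFinset hdeg
  have hre : r ≤ 2 * e := (Nat.le_mul_of_pos_right r Fintype.card_pos).trans hrv
  set q := Paper.deletionExponent r e with hq
  refine ⟨1 / (2 * e), by positivity, 1 / 16, by norm_num, 256, fun n hn => ?_⟩
  calc 1 / 16 * (n : ℝ) ^ (2 - 2 / (r : ℝ) + 1 / (2 * e)) = (n : ℝ) ^ (2 - q) / 16 := by
        rw [one_div_mul_eq_div, hq, Paper.deletionExponent]
        ring_nf
    _ ≤ (n.choose 2 : ℝ) / ⌈(n : ℝ) ^ q⌉₊ - (n : ℝ) ^ v / (⌈(n : ℝ) ^ q⌉₊ : ℝ) ^ e :=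
        Paper.rpow_two_sub_div_sixteen_le hn (Paper.deletionExponent_nonneg (by omega) hre)
          (Paper.deletionExponent_le_one hr e)
          (Paper.le_deletionExponent_mul_add_half (by omega) he hrv)
    _ ≤ Paper.exNumber n H :=
        Paper.choose_two_div_sub_pow_div_le_exNumber H hH n (Nat.ceil_pos.2 (by positivity))
end
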